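/- arXiv:1709.02849 — 5 statements merged into one kernel-verified Lean document; each statement's English description precedes it below -/
import Mathlib

section
/- Let G be an LCA group, H a closed subgroup with countable annihilator Λ in the dual group Γ, μ a finite regular Borel measure on Γ, and α ∈ (0,∞). For x ∈ G let P(x̃) denote the linear span of the characters γ ↦ ⟨γ, x + y⟩, y ∈ H, viewed in L^α(μ). With T a Borel transversal for Λ and ν as above, the map V_{x̃} defined by (V_{x̃}φ)(γ) := ⟨λ, x̃⟩ φ(γ − λ) for γ ∈ λ + T, λ ∈ Λ, is an isometric isomorphism from L^α(ν) onto the closure C_α P(x̃) of P(x̃) in L^α(μ), and V_{x̃} p = p for every p ∈ P(x̃). -/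
open MeasureTheory Set Pointwise
open scoped ENNReal

/-- The space of trigonometric polynomials with frequencies from the coset `x + H`,
where `e x γ` denotes the value `⟨γ, x⟩` of the character `γ ∈ Γ` at `x ∈ G`. -/
def trigPoly {G Γ : Type*} [AddCommGroup G] (e : G → Γ → ℂ) (H : AddSubgroup G)
    (x : G) : Set (Γ → ℂ) :=
  (Submodule.span ℂ {f : Γ → ℂ | ∃ y ∈ H, f = e (x + y)} : Submodule ℂ (Γ → ℂ))

/-- Membership in the closure `C_α P(x̃)` of `trigPoly e H x` in `L^α(μ)`. -/
def memCl {G Γ : Type*} [AddCommGroup G] [MeasurableSpace Γ] (e : G → Γ → ℂ)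
    (H : AddSubgroup G) (α : ℝ≥0∞) (μ : Measure Γ) (x : G) (f : Γ → ℂ) : Prop :=
  MemLp f α μ ∧
    ∀ ε : ℝ≥0∞, 0 < ε → ∃ p ∈ trigPoly e H x, eLpNorm (f - p) α μ < ε

open Filter Topology

lemma aux_eta (C ε : ℝ≥0∞) (hC : C ≠ ∞) (hε : 0 < ε) :
    ∃ η : ℝ≥0∞, 0 < η ∧ C * (η + η) < ε := by
  rcases eq_or_ne ε ∞ with rfl | hεtop
  · refine ⟨1, one_pos, ?_⟩
    rw [lt_top_iff_ne_top]
    exact ENNReal.mul_ne_top hC (by norm_num)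
  · have ha0 : (4 : ℝ≥0∞) * (C + 1) ≠ 0 := by simp
    have hatop : (4 : ℝ≥0∞) * (C + 1) ≠ ∞ :=
      ENNReal.mul_ne_top (by norm_num) (ENNReal.add_ne_top.mpr ⟨hC, by norm_num⟩)
    refine ⟨ε / 2 / (4 * (C + 1)), ENNReal.div_pos (ENNReal.div_pos hε.ne' (by norm_num)).ne' hatop, ?_⟩
    have h2 : 2 * C ≤ 4 * (C + 1) := by
      calc 2 * C ≤ 4 * C := mul_le_mul_left (by norm_num) C
        _ ≤ 4 * (C + 1) := mul_le_mul_right le_self_add 4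
    calc C * (ε / 2 / (4 * (C + 1)) + ε / 2 / (4 * (C + 1)))
        = 2 * C * (ε / 2 / (4 * (C + 1))) := by ring
      _ ≤ 4 * (C + 1) * (ε / 2 / (4 * (C + 1))) := mul_le_mul_left h2 _
      _ = ε / 2 := ENNReal.mul_div_cancel ha0 hatop
      _ < ε := ENNReal.half_lt_self hε.ne' hεtop

lemma aux_d (M : ℝ≥0∞) (η : ℝ≥0∞) (hM : M ≠ ∞) (hη : 0 < η) :
    ∃ d : ℝ, 0 < d ∧ M * ENNReal.ofReal d < η := by
  have hM1 : M + 1 ≠ 0 := by simp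
  have hM1top : M + 1 ≠ ∞ := ENNReal.add_ne_top.mpr ⟨hM, by norm_num⟩
  set η' := min η 1 with hη'
  have hη'0 : η' ≠ 0 := by
    simp only [hη', ne_eq, min_eq_iff]
    rintro (⟨h, -⟩ | ⟨h, -⟩) <;> simp_all [hη.ne']
  have hη'top : η' ≠ ∞ := by
    refine ne_top_of_le_ne_top (by norm_num) (min_le_right η 1)
  set b := η' / (M + 1) with hb
  have hb0 : b ≠ 0 := (ENNReal.div_pos hη'0 hM1top).ne'
  have hbtop : b ≠ ∞ := (ENNReal.div_lt_top hη'top hM1).ne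
  have hhalf : b / 2 ≠ 0 := by
    simp [ENNReal.div_eq_zero_iff, hb0]
  have hhalftop : b / 2 ≠ ∞ := (ENNReal.div_lt_top hbtop (by norm_num)).ne
  refine ⟨(b / 2).toReal, ENNReal.toReal_pos hhalf hhalftop, ?_⟩
  rw [ENNReal.ofReal_toReal hhalftop]
  calc M * (b / 2) ≤ (M + 1) * (b / 2) := mul_le_mul_left le_self_add _
    _ < (M + 1) * b := (ENNReal.mul_lt_mul_iff_right hM1 hM1top).2 (ENNReal.half_lt_self hb0 hbtop)
    _ = η' := ENNReal.mul_div_cancel hM1 hM1top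
    _ ≤ η := min_le_left η 1

lemma aux_delta (η : ℝ≥0∞) (hη : 0 < η) (r : ℝ) (hr : 0 < r) :
    ∃ δ : ℝ≥0∞, 0 < δ ∧ δ ≠ ∞ ∧ (δ + δ) ^ r < η := by
  have hm0 : min η 1 ≠ 0 := by
    simp only [ne_eq, min_eq_iff]
    rintro (⟨h, -⟩ | ⟨h, -⟩) <;> simp_all [hη.ne']
  have hmtop : min η 1 ≠ ∞ := ne_top_of_le_ne_top (by norm_num) (min_le_right η 1)
  set η' := min η 1 / 2 with hη'
  have hη'0 : η' ≠ 0 := by simp [hη', ENNReal.div_eq_zero_iff, hm0]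
  have hη'top : η' ≠ ∞ := (ENNReal.div_lt_top hmtop (by norm_num)).ne
  have hη'lt : η' < η := lt_of_lt_of_le (ENNReal.half_lt_self hm0 hmtop) (min_le_left η 1)
  set a := η' ^ r⁻¹ with ha
  have ha0 : a ≠ 0 := by
    simp [ha, ENNReal.rpow_eq_zero_iff, hη'0, hη'top]
  have hatop : a ≠ ∞ := by
    simp [ha, ENNReal.rpow_eq_top_iff, hη'0, hη'top]
  refine ⟨a / 2, ENNReal.div_pos ha0 (by norm_num), (ENNReal.div_lt_top hatop (by norm_num)).ne, ?_⟩
  rw [ENNReal.add_halves, ha, ← ENNReal.rpow_mul, inv_mul_cancel₀ hr.ne', ENNReal.rpow_one]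
  exact hη'lt

lemma unit_mul_conj {z : ℂ} (hz : ‖z‖ = 1) : z * (starRingEnd ℂ) z = 1 := by
  rw [Complex.mul_conj, Complex.normSq_eq_norm_sq, hz]
  norm_num

lemma unit_conj_eq_inv {z : ℂ} (hz : ‖z‖ = 1) : (starRingEnd ℂ) z = z⁻¹ :=
  eq_inv_of_mul_eq_one_right (unit_mul_conj hz)

section helpers

variable {G Γ : Type*} [AddCommGroup G] [AddCommGroup Γ]

lemma e_ne_zero (e : G → Γ → ℂ) (he_norm : ∀ x γ, ‖e x γ‖ = 1) (x : G) (γ : Γ) : e x γ ≠ 0 :=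
  fun h => by simpa [h] using he_norm x γ

lemma e_zero_left (e : G → Γ → ℂ) (he_norm : ∀ x γ, ‖e x γ‖ = 1)
    (he_addG : ∀ x y γ, e (x + y) γ = e x γ * e y γ) (γ : Γ) : e 0 γ = 1 := by
  have h := he_addG 0 0 γ
  rw [add_zero] at h
  have hne := e_ne_zero e he_norm 0 γ
  have h2 : e 0 γ * e 0 γ = e 0 γ * 1 := by rw [mul_one, ← h]
  exact mul_left_cancel₀ hne h2

lemma e_zero_right (e : G → Γ → ℂ) (he_norm : ∀ x γ, ‖e x γ‖ = 1)
    (he_addΓ : ∀ x γ δ, e x (γ + δ) = e x γ * e x δ) (x : G) : e x (0 : Γ) = 1 := by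
  have h := he_addΓ x 0 0
  rw [add_zero] at h
  have hne := e_ne_zero e he_norm x (0 : Γ)
  have h2 : e x (0:Γ) * e x (0:Γ) = e x (0:Γ) * 1 := by rw [mul_one, ← h]
  exact mul_left_cancel₀ hne h2

lemma spanE_mul (e : G → Γ → ℂ) (H : AddSubgroup G)
    (he_addG : ∀ x y γ, e (x + y) γ = e x γ * e y γ)
    {f g : Γ → ℂ} (hf : f ∈ Submodule.span ℂ {f : Γ → ℂ | ∃ y ∈ H, f = e y})
    (hg : g ∈ Submodule.span ℂ {f : Γ → ℂ | ∃ y ∈ H, f = e y}) :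
    f * g ∈ Submodule.span ℂ {f : Γ → ℂ | ∃ y ∈ H, f = e y} := by
  induction hf using Submodule.span_induction with
  | mem f hfm =>
    obtain ⟨y, hy, rfl⟩ := hfm
    induction hg using Submodule.span_induction with
    | mem g hgm =>
      obtain ⟨y', hy', rfl⟩ := hgm
      refine Submodule.subset_span ⟨y + y', H.add_mem hy hy', ?_⟩
      funext γ
      exact (he_addG y y' γ).symm
    | zero => rw [mul_zero]; exact Submodule.zero_mem _
    | add g₁ g₂ h₁ h₂ ih₁ ih₂ => rw [mul_add]; exact Submodule.add_mem _ ih₁ ih₂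
    | smul c g h ih => rw [mul_smul_comm]; exact Submodule.smul_mem _ _ ih
  | zero => rw [zero_mul]; exact Submodule.zero_mem _
  | add f₁ f₂ h₁ h₂ ih₁ ih₂ => rw [add_mul]; exact Submodule.add_mem _ ih₁ ih₂
  | smul c f h ih => rw [smul_mul_assoc]; exact Submodule.smul_mem _ _ ih

lemma spanE_star (e : G → Γ → ℂ) (H : AddSubgroup G)
    (he_norm : ∀ x γ, ‖e x γ‖ = 1)
    (he_addG : ∀ x y γ, e (x + y) γ = e x γ * e y γ)
    {f : Γ → ℂ} (hf : f ∈ Submodule.span ℂ {f : Γ → ℂ | ∃ y ∈ H, f = e y}) :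
    (fun γ => star (f γ)) ∈ Submodule.span ℂ {f : Γ → ℂ | ∃ y ∈ H, f = e y} := by
  induction hf using Submodule.span_induction with
  | mem f hfm =>
    obtain ⟨y, hy, rfl⟩ := hfm
    refine Submodule.subset_span ⟨-y, H.neg_mem hy, ?_⟩
    funext γ
    have h1 : e (-y) γ * e y γ = 1 := by
      rw [← he_addG, neg_add_cancel, e_zero_left e he_norm he_addG]
    have h2 : e (-y) γ = (e y γ)⁻¹ := eq_inv_of_mul_eq_one_left h1
    have hs : star (e y γ) = (starRingEnd ℂ) (e y γ) := rfl
    rw [hs, unit_conj_eq_inv (he_norm y γ), h2]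
  | zero =>
    have h0 : (fun γ : Γ => star ((0 : Γ → ℂ) γ)) = (0 : Γ → ℂ) := by funext γ; simp
    rw [h0]; exact Submodule.zero_mem _
  | add f₁ f₂ h₁ h₂ ih₁ ih₂ =>
    have : (fun γ => star ((f₁ + f₂) γ)) = (fun γ => star (f₁ γ)) + fun γ => star (f₂ γ) := by
      funext γ; simp [star_add]
    rw [this]; exact Submodule.add_mem _ ih₁ ih₂
  | smul c f h ih =>
    have : (fun γ => star ((c • f) γ)) = (starRingEnd ℂ c) • fun γ => star (f γ) := by
      funext γ
      exact star_mul' c (f γ)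
    rw [this]; exact Submodule.smul_mem _ _ ih

end helpers

lemma core_SW {G Γ : Type*} [AddCommGroup G]
    [AddCommGroup Γ] [TopologicalSpace Γ] [T2Space Γ]
    [MeasurableSpace Γ] [OpensMeasurableSpace Γ]
    (e : G → Γ → ℂ) (he_cont : ∀ x, Continuous (e x))
    (he_norm : ∀ x γ, ‖e x γ‖ = 1)
    (he_addG : ∀ x y γ, e (x + y) γ = e x γ * e y γ)
    (he_addΓ : ∀ x γ δ, e x (γ + δ) = e x γ * e x δ)
    (H : AddSubgroup G) (Λ : AddSubgroup Γ)
    (hΛ : ∀ γ : Γ, γ ∈ Λ ↔ ∀ y ∈ H, e y γ = 1)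
    (μ : MeasureTheory.Measure Γ) [MeasureTheory.IsFiniteMeasure μ]
    [μ.InnerRegularCompactLTTop]
    (α : ℝ≥0∞) (hα0 : α ≠ 0) (hαtop : α ≠ ∞)
    (C : Set Γ) (hCm : MeasurableSet C) (hCinv : ∀ γ ∈ C, ∀ l ∈ Λ, γ + l ∈ C)
    {ε : ℝ≥0∞} (hε : 0 < ε) :
    ∃ q ∈ Submodule.span ℂ {f : Γ → ℂ | ∃ y ∈ H, f = e y},
      eLpNorm (C.indicator (fun _ => (1:ℂ)) - q) α μ < ε := by
  classical
  obtain ⟨η, hη, hηε⟩ := aux_eta (ENNReal.LpAddConst α) ε (ENNReal.LpAddConst_lt_top α).ne hε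
  have hρ : (0:ℝ) < α.toReal⁻¹ := by
    have := ENNReal.toReal_pos hα0 hαtop
    positivity
  obtain ⟨δ, hδ0, hδtop, hδη⟩ := aux_delta η hη _ hρ
  -- compact subsets of C and Cᶜ
  obtain ⟨K, hKC, hKco, hKμ⟩ := hCm.exists_isCompact_diff_lt (measure_ne_top μ C) hδ0.ne'
  obtain ⟨K', hK'C, hK'co, hK'μ⟩ :=
    hCm.compl.exists_isCompact_diff_lt (measure_ne_top μ Cᶜ) hδ0.ne'
  -- the compactification map
  set J : Γ → (H → ℂ) := fun γ y => e (y : G) γ with hJ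
  have hJcont : Continuous J := continuous_pi fun y => he_cont (y : G)
  have hBox : IsCompact (Set.univ.pi fun _ : H => Metric.closedBall (0:ℂ) 1) :=
    isCompact_univ_pi fun _ => isCompact_closedBall _ _
  have hrange : Set.range J ⊆ Set.univ.pi fun _ : H => Metric.closedBall (0:ℂ) 1 := by
    rintro _ ⟨γ, rfl⟩ y -
    simpa [Metric.mem_closedBall, dist_zero_right] using (he_norm (y : G) γ).le
  set Cc : Set (H → ℂ) := closure (Set.range J) with hCc
  have hCcco : IsCompact Cc :=
    hBox.of_isClosed_subset isClosed_closure (closure_minimal hrange hBox.isClosed)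
  haveI : CompactSpace Cc := isCompact_iff_compactSpace.mp hCcco
  set J' : Γ → Cc := fun γ => ⟨J γ, subset_closure (Set.mem_range_self γ)⟩ with hJ'
  have hJ'cont : Continuous J' := hJcont.subtype_mk _
  have hJ'inj : ∀ {a b : Γ}, J' a = J' b → a - b ∈ Λ := by
    intro a b hab
    rw [hΛ]
    intro y hy
    have hco : e y a = e y b := congrFun (congrArg Subtype.val hab) ⟨y, hy⟩
    have h1 : e y b * e y (a - b) = e y a := by
      rw [← he_addΓ]; congr 1; abel
    have hne := e_ne_zero e he_norm y b
    have h2 : e y b * e y (a - b) = e y b * 1 := by rw [mul_one, h1, hco]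
    exact mul_left_cancel₀ hne h2
  -- disjoint closed images
  have hdisj : Disjoint (J' '' K) (J' '' K') := by
    rw [Set.disjoint_left]
    rintro z ⟨a, ha, rfl⟩ ⟨b, hb, hab⟩
    have hl : b - a ∈ Λ := hJ'inj hab
    have hbC : b ∈ C := by
      have := hCinv a (hKC ha) (b - a) hl
      simpa using this
    exact hK'C hb hbC
  have hKcl : IsClosed (J' '' K) := (hKco.image hJ'cont).isClosed
  have hK'cl : IsClosed (J' '' K') := (hK'co.image hJ'cont).isClosed
  -- Urysohn
  obtain ⟨F, hF0, hF1, hF01⟩ := exists_continuous_zero_one_of_isClosed hK'cl hKcl hdisj.symm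
  -- Stone-Weierstrass
  set coord : H → C(Cc, ℂ) :=
    fun y => ⟨fun z => (z : H → ℂ) y, (continuous_apply _).comp continuous_subtype_val⟩ with hcoord
  set A₀ : StarSubalgebra ℂ C(Cc, ℂ) := StarAlgebra.adjoin ℂ (Set.range coord) with hA₀
  have hsep : A₀.SeparatesPoints := by
    intro z w hzw
    have hex : ∃ y : H, (z : H → ℂ) y ≠ (w : H → ℂ) y := by
      by_contra hcon
      push_neg at hcon
      exact hzw (Subtype.ext (funext hcon))
    obtain ⟨y, hy⟩ := hex
    exact ⟨_, ⟨coord y, StarAlgebra.subset_adjoin ℂ _ (Set.mem_range_self y), rfl⟩, hy⟩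
  have htop := ContinuousMap.starSubalgebra_topologicalClosure_eq_top_of_separatesPoints A₀ hsep
  set F' : C(Cc, ℂ) := (⟨Complex.ofReal, Complex.continuous_ofReal⟩ : C(ℝ, ℂ)).comp F with hF'
  have hMne : μ Set.univ ^ α.toReal⁻¹ ≠ ∞ :=
    (ENNReal.rpow_lt_top_of_nonneg hρ.le (measure_ne_top μ _)).ne
  obtain ⟨d, hd0, hdM⟩ := aux_d (μ Set.univ ^ α.toReal⁻¹) η hMne hη
  have hF'mem : F' ∈ closure (A₀ : Set C(Cc, ℂ)) := by
    have : F' ∈ A₀.topologicalClosure := by rw [htop]; trivial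
    rwa [← StarSubalgebra.topologicalClosure_coe]
  obtain ⟨P, hPA, hPd⟩ := Metric.mem_closure_iff.mp hF'mem d hd0
  set q : Γ → ℂ := fun γ => P (J' γ) with hq
  -- pullback membership
  have hqmem : ∀ (P : C(Cc, ℂ)), P ∈ A₀ →
      (fun γ => P (J' γ)) ∈ Submodule.span ℂ {f : Γ → ℂ | ∃ y ∈ H, f = e y} := by
    intro P hP
    induction hP using StarAlgebra.adjoin_induction with
    | mem P hPm =>
      obtain ⟨y, rfl⟩ := hPm
      exact Submodule.subset_span ⟨(y : G), y.2, rfl⟩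
    | algebraMap c =>
      have h1 : (fun γ => (algebraMap ℂ C(Cc, ℂ) c) (J' γ)) = c • e (0 : G) := by
        funext γ
        simp [Algebra.algebraMap_eq_smul_one, e_zero_left e he_norm he_addG]
      rw [h1]
      exact Submodule.smul_mem _ _ (Submodule.subset_span ⟨0, zero_mem _, rfl⟩)
    | add P Q hP hQ ihP ihQ =>
      have h1 : (fun γ => (P + Q) (J' γ)) = (fun γ => P (J' γ)) + fun γ => Q (J' γ) := by
        funext γ; simp
      rw [h1]; exact Submodule.add_mem _ ihP ihQ
    | mul P Q hP hQ ihP ihQ =>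
      have h1 : (fun γ => (P * Q) (J' γ)) = (fun γ => P (J' γ)) * fun γ => Q (J' γ) := by
        funext γ; simp
      rw [h1]; exact spanE_mul e H he_addG ihP ihQ
    | star P hP ihP =>
      have h1 : (fun γ => (star P) (J' γ)) = fun γ => star (P (J' γ)) := by
        funext γ; simp
      rw [h1]; exact spanE_star e H he_norm he_addG ihP
  refine ⟨q, hqmem P hPA, ?_⟩
  -- error estimate
  set f₁ : Γ → ℂ := C.indicator (fun _ => (1:ℂ)) - fun γ => F' (J' γ) with hf₁
  set f₂ : Γ → ℂ := (fun γ => F' (J' γ)) - q with hf₂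
  have hsplit : C.indicator (fun _ => (1:ℂ)) - q = f₁ + f₂ := by
    rw [hf₁, hf₂, sub_add_sub_cancel]
  have haesm₁ : MeasureTheory.AEStronglyMeasurable f₁ μ :=
    ((measurable_const.indicator hCm).sub
      (F'.continuous.comp hJ'cont).measurable).aestronglyMeasurable
  have haesm₂ : MeasureTheory.AEStronglyMeasurable f₂ μ :=
    ((F'.continuous.comp hJ'cont).sub (P.continuous.comp hJ'cont)).aestronglyMeasurable
  -- f₂ bound
  have hf₂b : eLpNorm f₂ α μ ≤ μ Set.univ ^ α.toReal⁻¹ * ENNReal.ofReal d := by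
    refine eLpNorm_le_of_ae_bound (Filter.Eventually.of_forall fun γ => ?_)
    have h1 : ‖f₂ γ‖ = dist (F' (J' γ)) (P (J' γ)) := by
      rw [hf₂, Pi.sub_apply, dist_eq_norm]
    rw [h1]
    exact (ContinuousMap.dist_apply_le_dist _).trans hPd.le
  -- f₁ bound
  set bad : Set Γ := (C \ K) ∪ (Cᶜ \ K') with hbad
  have hbadm : MeasurableSet bad :=
    (hCm.diff hKco.isClosed.measurableSet).union (hCm.compl.diff hK'co.isClosed.measurableSet)
  have hf₁pt : ∀ γ, ‖f₁ γ‖ ≤ ‖bad.indicator (fun _ => (1:ℂ)) γ‖ := by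
    intro γ
    have hFb : ‖F' (J' γ)‖ ≤ 1 := by
      have := hF01 (J' γ)
      simp only [hF', ContinuousMap.comp_apply, ContinuousMap.coe_mk]
      rw [Complex.norm_real, Real.norm_eq_abs]
      rw [abs_le]
      constructor <;> [linarith [this.1]; linarith [this.2]]
    by_cases hγK : γ ∈ K
    · have hFK : F (J' γ) = 1 := hF1 (Set.mem_image_of_mem _ hγK)
      have : f₁ γ = 0 := by
        rw [hf₁, Pi.sub_apply, Set.indicator_of_mem (hKC hγK)]
        simp [hF', hFK]
      rw [this]; simp [norm_nonneg]
    · by_cases hγK' : γ ∈ K'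
      · have hFK : F (J' γ) = 0 := hF0 (Set.mem_image_of_mem _ hγK')
        have : f₁ γ = 0 := by
          rw [hf₁, Pi.sub_apply, Set.indicator_of_notMem (fun h => hK'C hγK' h)]
          simp [hF', hFK]
        rw [this]; simp [norm_nonneg]
      · have hγbad : γ ∈ bad := by
          by_cases hγC : γ ∈ C
          · exact Or.inl ⟨hγC, hγK⟩
          · exact Or.inr ⟨hγC, hγK'⟩
        rw [Set.indicator_of_mem hγbad, norm_one]
        have hF0le := (hF01 (J' γ)).1
        have hF1le := (hF01 (J' γ)).2
        by_cases hγC : γ ∈ C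
        · rw [hf₁, Pi.sub_apply, Set.indicator_of_mem hγC]
          simp only [hF', ContinuousMap.comp_apply, ContinuousMap.coe_mk]
          have : (1 : ℂ) - (F (J' γ) : ℂ) = ((1 - F (J' γ) : ℝ) : ℂ) := by push_cast; ring
          rw [this, Complex.norm_real, Real.norm_eq_abs, abs_le]
          constructor <;> [linarith; linarith]
        · rw [hf₁, Pi.sub_apply, Set.indicator_of_notMem hγC]
          simp only [hF', ContinuousMap.comp_apply, ContinuousMap.coe_mk, zero_sub, norm_neg]
          rw [Complex.norm_real, Real.norm_eq_abs, abs_le]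
          constructor <;> [linarith; linarith]
  have hf₁b : eLpNorm f₁ α μ < η := by
    have h1 : eLpNorm f₁ α μ ≤ eLpNorm (bad.indicator (fun _ => (1:ℂ))) α μ :=
      eLpNorm_mono hf₁pt
    have h2 : eLpNorm (bad.indicator (fun _ => (1:ℂ))) α μ = μ bad ^ (1 / α.toReal) := by
      rw [eLpNorm_indicator_const hbadm hα0 hαtop]
      simp
    have h3 : μ bad ≤ δ + δ := by
      refine (measure_union_le _ _).trans ?_
      exact add_le_add hKμ.le hK'μ.le
    have h4 : μ bad ^ (1 / α.toReal) ≤ (δ + δ) ^ (1 / α.toReal) :=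
      ENNReal.rpow_le_rpow h3 (by positivity)
    calc eLpNorm f₁ α μ ≤ μ bad ^ (1 / α.toReal) := h1.trans_eq h2
      _ ≤ (δ + δ) ^ (1 / α.toReal) := h4
      _ < η := by rw [one_div]; exact hδη
  -- combine
  rw [hsplit]
  calc eLpNorm (f₁ + f₂) α μ ≤ ENNReal.LpAddConst α * (eLpNorm f₁ α μ + eLpNorm f₂ α μ) :=
        eLpNorm_add_le' haesm₁ haesm₂ α
    _ ≤ ENNReal.LpAddConst α * (η + η) := by
        refine mul_le_mul_right (add_le_add hf₁b.le (hf₂b.trans hdM.le)) _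
    _ < ε := hηε


/-- The map `V_{x̃}`, `(V_{x̃}φ)(γ) = ⟨λ, x̃⟩ φ(γ - λ)` for `γ ∈ λ + T`,
is an isometric isomorphism from `L^α(ν)` onto the closure `C_α P(x̃)` of the
trigonometric polynomials with frequencies in `x + H` in `L^α(μ)`, and `V_{x̃} p = p`
for every such polynomial `p`. -/
theorem stmt3 {G Γ : Type*}
    [AddCommGroup G] [TopologicalSpace G] [IsTopologicalAddGroup G] [T2Space G]
    [LocallyCompactSpace G]
    [AddCommGroup Γ] [TopologicalSpace Γ] [IsTopologicalAddGroup Γ] [T2Space Γ]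
    [LocallyCompactSpace Γ] [MeasurableSpace Γ] [BorelSpace Γ]
    (e : G → Γ → ℂ)
    (he_cont : ∀ x, Continuous (e x))
    (he_norm : ∀ x γ, ‖e x γ‖ = 1)
    (he_addG : ∀ x y γ, e (x + y) γ = e x γ * e y γ)
    (he_addΓ : ∀ x γ δ, e x (γ + δ) = e x γ * e x δ)
    (H : AddSubgroup G) (hHc : IsClosed (H : Set G))
    (Λ : AddSubgroup Γ) [Countable Λ]
    (hΛ : ∀ γ : Γ, γ ∈ Λ ↔ ∀ y ∈ H, e y γ = 1)
    (μ : Measure Γ) [IsFiniteMeasure μ] [μ.Regular]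
    (α : ℝ≥0∞) (hα0 : 0 < α) (hαtop : α ≠ ∞)
    (T : Set Γ) (hT : MeasurableSet T)
    (htrans : ∀ γ : Γ, ∃! t, t ∈ T ∧ γ - t ∈ Λ)
    (ν : Measure Γ)
    (hν : ν = Measure.sum fun l : Λ =>
      Measure.map (fun γ => γ - (l : Γ)) (μ.restrict ((l : Γ) +ᵥ T)))
    (x : G)
    (V : (Γ → ℂ) → Γ → ℂ)
    (hV : ∀ (φ : Γ → ℂ) (l : Λ) (γ : Γ), γ ∈ (l : Γ) +ᵥ T →
      V φ γ = e x (l : Γ) * φ (γ - (l : Γ))) :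
    (∀ φ : Γ → ℂ, MemLp φ α ν →
      MemLp (V φ) α μ ∧ eLpNorm (V φ) α μ = eLpNorm φ α ν ∧
        memCl e H α μ x (V φ)) ∧
    (∀ f : Γ → ℂ, memCl e H α μ x f →
      ∃ φ : Γ → ℂ, MemLp φ α ν ∧ V φ =ᵐ[μ] f) ∧
    (∀ p ∈ trigPoly e H x, V p = p) := by
  classical
  have hαne : α ≠ 0 := hα0.ne'
  have hene : ∀ (x' : G) (γ : Γ), e x' γ ≠ 0 := e_ne_zero e he_norm
  have hnn : ∀ (x' : G) (γ : Γ), ‖e x' γ‖₊ = 1 := by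
    intro x' γ
    ext
    simpa using he_norm x' γ
  -- vadd membership
  have hvadd : ∀ (a : Γ) (B : Set Γ) (γ : Γ), γ ∈ a +ᵥ B ↔ γ - a ∈ B := by
    intro a B γ
    constructor
    · rintro ⟨b, hb, rfl⟩
      simpa [vadd_eq_add] using hb
    · intro h
      exact ⟨γ - a, h, by simp [vadd_eq_add]⟩
  -- the transversal function
  choose tf htfT htfΛ using fun γ => (htrans γ).exists
  have huniq : ∀ (γ t' : Γ), t' ∈ T → γ - t' ∈ Λ → t' = tf γ := fun γ t' h1 h2 =>
    (htrans γ).unique ⟨h1, h2⟩ ⟨htfT γ, htfΛ γ⟩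
  set S : Λ → Set Γ := fun l => (l : Γ) +ᵥ T with hS
  have hmem_lf : ∀ γ : Γ, γ ∈ S ⟨γ - tf γ, htfΛ γ⟩ := by
    intro γ
    rw [hS, hvadd]
    simpa [sub_sub_cancel] using htfT γ
  have hVf : ∀ (g : Γ → ℂ) (γ : Γ), V g γ = e x (γ - tf γ) * g (tf γ) := by
    intro g γ
    have h := hV g ⟨γ - tf γ, htfΛ γ⟩ γ (hmem_lf γ)
    rwa [sub_sub_cancel] at h
  have hcover : (⋃ l : Λ, S l) = univ :=
    eq_univ_of_forall fun γ => mem_iUnion.2 ⟨⟨γ - tf γ, htfΛ γ⟩, hmem_lf γ⟩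
  have hdisjS : Pairwise (Function.onFun Disjoint S) := by
    intro l l' hne
    rw [Function.onFun, Set.disjoint_left]
    intro γ h1 h2
    rw [hS, hvadd] at h1 h2
    have e1 : γ - (l : Γ) = tf γ := huniq γ _ h1 (by simpa [sub_sub_cancel] using l.2)
    have e2 : γ - (l' : Γ) = tf γ := huniq γ _ h2 (by simpa [sub_sub_cancel] using l'.2)
    exact hne (Subtype.ext (by rw [← sub_right_inj (a := γ)]; rw [e1, e2]))
  have hSm : ∀ l : Λ, MeasurableSet (S l) := by
    intro l
    have h1 : S l = (fun γ => γ - (l : Γ)) ⁻¹' T := Set.ext fun γ => by rw [hS, hvadd]; rfl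
    rw [h1]
    exact (continuous_sub_right _).measurable hT
  have hμsum : μ = Measure.sum (fun l : Λ => μ.restrict (S l)) := by
    conv_lhs => rw [← Measure.restrict_univ (μ := μ), ← hcover]
    exact Measure.restrict_iUnion hdisjS hSm
  -- the measurable equivalences
  have hmapEq : ∀ l : Λ, Measure.map (fun γ => γ - (l : Γ)) (μ.restrict (S l)) =
      Measure.map (⇑((Homeomorph.subRight (l : Γ)).toMeasurableEquiv)) (μ.restrict (S l)) := by
    intro l; rfl
  -- the isometry on lintegrals
  have hlint : ∀ g : Γ → ℂ,
      ∫⁻ γ, (‖g γ‖₊ : ℝ≥0∞) ^ α.toReal ∂ν = ∫⁻ γ, (‖V g γ‖₊ : ℝ≥0∞) ^ α.toReal ∂μ := by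
    intro g
    conv_rhs => rw [hμsum]
    rw [hν, lintegral_sum_measure, lintegral_sum_measure]
    refine tsum_congr fun l => ?_
    rw [hmapEq l, lintegral_map_equiv]
    refine setLIntegral_congr_fun (hSm l) (fun γ hγ => ?_)
    have h1 : V g γ = e x (l : Γ) * g (γ - (l : Γ)) := hV g l γ hγ
    rw [h1]
    have h2 : ‖e x (l : Γ) * g (γ - (l : Γ))‖₊ = ‖g (γ - (l : Γ))‖₊ := by
      rw [nnnorm_mul, hnn, one_mul]
    rw [h2]
    rfl
  have hiso : ∀ g : Γ → ℂ, eLpNorm (V g) α μ = eLpNorm g α ν := by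
    intro g
    rw [eLpNorm_eq_lintegral_rpow_enorm_toReal hαne hαtop, eLpNorm_eq_lintegral_rpow_enorm_toReal hαne hαtop]
    simp only [enorm_eq_nnnorm]
    rw [hlint g]
  -- a.e. strong measurability of V g
  have hVaesm : ∀ {g : Γ → ℂ}, AEStronglyMeasurable g ν → AEStronglyMeasurable (V g) μ := by
    intro g hg
    rw [hμsum, aestronglyMeasurable_sum_measure_iff]
    intro l
    have h1 : AEStronglyMeasurable g (Measure.map (fun γ => γ - (l : Γ)) (μ.restrict (S l))) := by
      refine hg.mono_measure ?_
      rw [hν]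
      exact Measure.le_sum _ l
    rw [hmapEq l] at h1
    have h2 : AEStronglyMeasurable (fun γ => g (γ - (l : Γ))) (μ.restrict (S l)) :=
      ((Homeomorph.subRight (l : Γ)).toMeasurableEquiv.measurableEmbedding.aestronglyMeasurable_map_iff).1 h1
    refine (h2.const_mul (e x (l : Γ))).congr ?_
    refine (ae_restrict_iff' (hSm l)).2 (Filter.Eventually.of_forall fun γ hγ => ?_)
    exact (hV g l γ hγ).symm
  -- trig polynomials: continuity
  have hPcont : ∀ p ∈ trigPoly e H x, Continuous p := by
    intro p hp
    induction hp using Submodule.span_induction with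
    | mem f hf => obtain ⟨y, -, rfl⟩ := hf; exact he_cont _
    | zero => exact continuous_const
    | add f g hf hg ihf ihg => exact ihf.add ihg
    | smul c f hf ih => exact ih.const_smul c
  have hPaesm : ∀ p ∈ trigPoly e H x, AEStronglyMeasurable p μ := fun p hp =>
    (hPcont p hp).aestronglyMeasurable
  -- trig polynomials: covariance
  have hcovP : ∀ p ∈ trigPoly e H x, ∀ (l : Λ) (γ : Γ), p ((l : Γ) + γ) = e x (l : Γ) * p γ := by
    intro p hp l γ
    induction hp using Submodule.span_induction with
    | mem f hf =>
      obtain ⟨y, hy, rfl⟩ := hf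
      rw [he_addΓ, he_addG, (hΛ (l : Γ)).1 l.2 y hy, mul_one]
    | zero => simp
    | add f g hf hg ihf ihg => simp only [Pi.add_apply, ihf, ihg]; ring
    | smul c f hf ih => simp only [Pi.smul_apply, smul_eq_mul, ih]; ring
  -- part 3
  have part3 : ∀ p ∈ trigPoly e H x, V p = p := by
    intro p hp
    funext γ
    calc V p γ = e x (γ - tf γ) * p (tf γ) := hVf p γ
      _ = p ((γ - tf γ) + tf γ) := (hcovP p hp ⟨γ - tf γ, htfΛ γ⟩ (tf γ)).symm
      _ = p γ := by rw [sub_add_cancel]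

  -- multiplication by e x maps spanE into trigPoly
  have hmulx : ∀ {qq : Γ → ℂ}, qq ∈ Submodule.span ℂ {f : Γ → ℂ | ∃ y ∈ H, f = e y} →
      (fun γ => e x γ * qq γ) ∈ trigPoly e H x := by
    intro qq hqq
    induction hqq using Submodule.span_induction with
    | mem f hf =>
      obtain ⟨y, hy, rfl⟩ := hf
      exact Submodule.subset_span ⟨y, hy, funext fun γ => (he_addG x y γ).symm⟩
    | zero =>
      have h0 : (fun γ => e x γ * (0 : Γ → ℂ) γ) = (0 : Γ → ℂ) := by funext γ; simp
      rw [h0]; exact Submodule.zero_mem _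
    | add f g hf hg ihf ihg =>
      have h0 : (fun γ => e x γ * (f + g) γ) = (fun γ => e x γ * f γ) + fun γ => e x γ * g γ := by
        funext γ; simp [mul_add]
      rw [h0]; exact Submodule.add_mem _ ihf ihg
    | smul c f hf ih =>
      have h0 : (fun γ => e x γ * (c • f) γ) = c • fun γ => e x γ * f γ := by
        funext γ; simp only [Pi.smul_apply, smul_eq_mul]; ring
      rw [h0]; exact Submodule.smul_mem _ _ ih
  -- approximation combinators
  have hC1 : ENNReal.LpAddConst α ≠ ∞ := (ENNReal.LpAddConst_lt_top α).ne
  have hAp_zero : memCl e H α μ x 0 := by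
    refine ⟨MemLp.zero, fun ε hε => ⟨0, Submodule.zero_mem _, ?_⟩⟩
    simpa [eLpNorm_zero] using hε
  have hAp_add : ∀ {f g : Γ → ℂ}, memCl e H α μ x f → memCl e H α μ x g →
      memCl e H α μ x (f + g) := by
    rintro f g ⟨hfm, hfa⟩ ⟨hgm, hga⟩
    refine ⟨hfm.add hgm, fun ε hε => ?_⟩
    obtain ⟨η, hη, hηε⟩ := aux_eta (ENNReal.LpAddConst α) ε hC1 hε
    obtain ⟨pf, hpf, hpf2⟩ := hfa η hη
    obtain ⟨pg, hpg, hpg2⟩ := hga η hη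
    refine ⟨pf + pg, Submodule.add_mem _ hpf hpg, ?_⟩
    have h1 : f + g - (pf + pg) = (f - pf) + (g - pg) := by abel
    rw [h1]
    calc eLpNorm ((f - pf) + (g - pg)) α μ
        ≤ ENNReal.LpAddConst α * (eLpNorm (f - pf) α μ + eLpNorm (g - pg) α μ) :=
          eLpNorm_add_le' (hfm.1.sub (hPaesm _ hpf)) (hgm.1.sub (hPaesm _ hpg)) α
      _ ≤ ENNReal.LpAddConst α * (η + η) := mul_le_mul_right (add_le_add hpf2.le hpg2.le) _
      _ < ε := hηε
  have hAp_smul : ∀ (cc : ℂ) {f : Γ → ℂ}, memCl e H α μ x f → memCl e H α μ x (cc • f) := by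
    rintro cc f ⟨hfm, hfa⟩
    refine ⟨hfm.const_smul cc, fun ε hε => ?_⟩
    rcases eq_or_ne cc 0 with rfl | hcc
    · refine ⟨0, Submodule.zero_mem _, ?_⟩
      simpa [eLpNorm_zero] using hε
    · have hncc : (‖cc‖₊ : ℝ≥0∞) ≠ 0 := by simpa using hcc
      obtain ⟨pf, hpf, hpf2⟩ := hfa (ε / ‖cc‖₊) (ENNReal.div_pos hε.ne' ENNReal.coe_ne_top)
      refine ⟨cc • pf, Submodule.smul_mem _ _ hpf, ?_⟩
      rw [← smul_sub, eLpNorm_const_smul]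
      calc (‖cc‖₊ : ℝ≥0∞) * eLpNorm (f - pf) α μ
          < (‖cc‖₊ : ℝ≥0∞) * (ε / ‖cc‖₊) :=
            (ENNReal.mul_lt_mul_iff_right hncc ENNReal.coe_ne_top).2 hpf2
        _ = ε := ENNReal.mul_div_cancel hncc ENNReal.coe_ne_top
  have hAp_close : ∀ {f : Γ → ℂ}, MemLp f α μ →
      (∀ δ : ℝ≥0∞, 0 < δ → ∃ g, memCl e H α μ x g ∧ eLpNorm (f - g) α μ < δ) →
      memCl e H α μ x f := by
    intro f hfm happ
    refine ⟨hfm, fun ε hε => ?_⟩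
    obtain ⟨η, hη, hηε⟩ := aux_eta (ENNReal.LpAddConst α) ε hC1 hε
    obtain ⟨g, ⟨hgm, hga⟩, hfg⟩ := happ η hη
    obtain ⟨pg, hpg, hpg2⟩ := hga η hη
    refine ⟨pg, hpg, ?_⟩
    have h1 : f - pg = (f - g) + (g - pg) := by abel
    rw [h1]
    calc eLpNorm ((f - g) + (g - pg)) α μ
        ≤ ENNReal.LpAddConst α * (eLpNorm (f - g) α μ + eLpNorm (g - pg) α μ) :=
          eLpNorm_add_le' (hfm.1.sub hgm.1) (hgm.1.sub (hPaesm _ hpg)) α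
      _ ≤ ENNReal.LpAddConst α * (η + η) := mul_le_mul_right (add_le_add hfg.le hpg2.le) _
      _ < ε := hηε
  -- the core approximation for indicators of subsets of T
  have hcore : ∀ A : Set Γ, MeasurableSet A → A ⊆ T →
      memCl e H α μ x (V (A.indicator fun _ => (1:ℂ))) := by
    intro A hAm hAT
    have haesm : AEStronglyMeasurable (V (A.indicator fun _ => (1:ℂ))) μ :=
      hVaesm (measurable_const.indicator hAm).aestronglyMeasurable
    have hbound : ∀ γ, ‖V (A.indicator fun _ => (1:ℂ)) γ‖ ≤ 1 := by
      intro γ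
      rw [hVf, norm_mul, he_norm, one_mul]
      by_cases h : tf γ ∈ A <;> simp [Set.indicator_apply, h]
    have hmem : MemLp (V (A.indicator fun _ => (1:ℂ))) α μ :=
      MemLp.of_bound haesm 1 (Filter.Eventually.of_forall hbound)
    refine hAp_close hmem ?_
    intro δ hδ
    have hρ : (0:ℝ) < α.toReal⁻¹ := by
      have := ENNReal.toReal_pos hαne hαtop
      positivity
    have hMfin : μ univ ^ α.toReal⁻¹ ≠ ∞ :=
      (ENNReal.rpow_lt_top_of_nonneg hρ.le (measure_ne_top μ _)).ne
    obtain ⟨d, hd0, hdM⟩ := aux_d (μ univ ^ α.toReal⁻¹) δ hMfin hδ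
    obtain ⟨N, hN⟩ := exists_nat_gt (2 / d)
    set n : ℕ := N + 1 with hn
    have hn0 : (0:ℝ) < (n:ℝ) := by positivity
    have h2nd : 2 / (n:ℝ) ≤ d := by
      rw [div_le_iff₀ hn0]
      have h2d : 2 / d < (n:ℝ) := by
        refine hN.trans_le ?_
        exact_mod_cast Nat.le_succ N
      rw [div_lt_iff₀ hd0] at h2d
      nlinarith
    set κ : Γ → ℤ × ℤ := fun s => (⌊(e x s).re * n⌋, ⌊(e x s).im * n⌋) with hκ
    have hκmeas : Measurable κ := by
      refine Measurable.prod ?_ ?_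
      · exact (Complex.measurable_re.comp (he_cont x).measurable).mul_const _ |>.floor
      · exact (Complex.measurable_im.comp (he_cont x).measurable).mul_const _ |>.floor
    set c : ℤ × ℤ → ℂ := fun j => (⟨(j.1 : ℝ) / n, (j.2 : ℝ) / n⟩ : ℂ) with hc
    set As : ℤ × ℤ → Set Γ := fun j => A ∩ κ ⁻¹' {j} with hAs
    have hAsm : ∀ j, MeasurableSet (As j) := fun j =>
      hAm.inter (hκmeas (measurableSet_singleton j))
    set Cs : ℤ × ℤ → Set Γ := fun j => ⋃ l : Λ, ((l : Γ) +ᵥ As j) with hCs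
    have hCsm : ∀ j, MeasurableSet (Cs j) := by
      intro j
      refine MeasurableSet.iUnion fun l => ?_
      have h1 : (l : Γ) +ᵥ As j = (fun γ => γ - (l : Γ)) ⁻¹' As j :=
        Set.ext fun γ => hvadd _ _ γ
      rw [h1]
      exact (continuous_sub_right _).measurable (hAsm j)
    have hCsinv : ∀ j, ∀ γ ∈ Cs j, ∀ l ∈ Λ, γ + l ∈ Cs j := by
      intro j γ hγ l hl
      simp only [hCs, mem_iUnion] at hγ ⊢
      obtain ⟨l', hl'⟩ := hγ
      rw [hvadd] at hl'
      refine ⟨l' + ⟨l, hl⟩, ?_⟩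
      rw [hvadd]
      have h1 : γ + l - ((l' : Γ) + l) = γ - (l' : Γ) := by abel
      rw [AddSubgroup.coe_add, h1]
      exact hl'
    have hCsind : ∀ j γ, γ ∈ Cs j ↔ tf γ ∈ As j := by
      intro j γ
      constructor
      · intro h
        simp only [hCs, mem_iUnion] at h
        obtain ⟨l, hl⟩ := h
        rw [hvadd] at hl
        have h1 : γ - (l : Γ) ∈ T := hAT hl.1
        have h2 : γ - (γ - (l : Γ)) ∈ Λ := by simpa [sub_sub_cancel] using l.2
        rw [← huniq γ _ h1 h2]
        exact hl
      · intro h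
        simp only [hCs, mem_iUnion]
        refine ⟨⟨γ - tf γ, htfΛ γ⟩, ?_⟩
        rw [hvadd]
        simpa [sub_sub_cancel] using h
    set J₀ : Finset (ℤ × ℤ) := Finset.Icc (-(n:ℤ), -(n:ℤ)) ((n:ℤ), (n:ℤ)) with hJ₀
    set g : Γ → ℂ := ∑ j ∈ J₀,
      (starRingEnd ℂ (c j)) • fun γ => e x γ * (Cs j).indicator (fun _ => (1:ℂ)) γ with hg
    have hbase : ∀ j, memCl e H α μ x (fun γ => e x γ * (Cs j).indicator (fun _ => (1:ℂ)) γ) := by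
      intro j
      constructor
      · refine MemLp.of_bound ?_ 1 (Filter.Eventually.of_forall fun γ => ?_)
        · exact ((he_cont x).measurable.mul
            (measurable_const.indicator (hCsm j))).aestronglyMeasurable
        · rw [norm_mul, he_norm, one_mul]
          by_cases h : γ ∈ Cs j <;> simp [Set.indicator_apply, h]
      · intro ε hε
        obtain ⟨q, hqmem, hqerr⟩ := core_SW e he_cont he_norm he_addG he_addΓ H Λ hΛ μ α hαne
          hαtop (Cs j) (hCsm j) (hCsinv j) hε
        refine ⟨fun γ => e x γ * q γ, hmulx hqmem, ?_⟩
        have h1 : eLpNorm ((fun γ => e x γ * (Cs j).indicator (fun _ => (1:ℂ)) γ) -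
            fun γ => e x γ * q γ) α μ = eLpNorm ((Cs j).indicator (fun _ => (1:ℂ)) - q) α μ := by
          refine eLpNorm_congr_norm_ae (Filter.Eventually.of_forall fun γ => ?_)
          simp only [Pi.sub_apply]
          rw [← mul_sub, norm_mul, he_norm, one_mul]
        rw [h1]
        exact hqerr
    have hgmem : memCl e H α μ x g := by
      rw [hg]
      refine Finset.sum_induction _ _ (fun a b ha hb => hAp_add ha hb) hAp_zero ?_
      intro j _
      exact hAp_smul _ (hbase j)
    refine ⟨g, hgmem, ?_⟩
    have hpt : ∀ γ, ‖(V (A.indicator fun _ => (1:ℂ)) - g) γ‖ ≤ d := by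
      intro γ
      have hgγ : g γ = ∑ j ∈ J₀,
          starRingEnd ℂ (c j) * (e x γ * (Cs j).indicator (fun _ => (1:ℂ)) γ) := by
        rw [hg, Finset.sum_apply]
        simp [Pi.smul_apply, smul_eq_mul]
      by_cases htA : tf γ ∈ A
      · set j₀ : ℤ × ℤ := κ (tf γ) with hj₀
        have hre : |(e x (tf γ)).re| ≤ 1 := by
          have h1 := Complex.abs_re_le_norm (e x (tf γ))
          rw [he_norm] at h1
          exact h1
        have him : |(e x (tf γ)).im| ≤ 1 := by
          have h1 := Complex.abs_im_le_norm (e x (tf γ))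
          rw [he_norm] at h1
          exact h1
        have hj₀mem : j₀ ∈ J₀ := by
          rw [hJ₀, Finset.mem_Icc]
          rw [abs_le] at hre him
          constructor <;> rw [Prod.le_def] <;> constructor
          · rw [hj₀]
            refine Int.le_floor.2 ?_
            push_cast
            nlinarith
          · rw [hj₀]
            refine Int.le_floor.2 ?_
            push_cast
            nlinarith
          · rw [hj₀]
            have : ((e x (tf γ)).re * n : ℝ) ≤ ((n:ℤ) : ℝ) := by push_cast; nlinarith
            calc ⌊(e x (tf γ)).re * (n:ℝ)⌋ ≤ ⌊((n:ℤ) : ℝ)⌋ := Int.floor_le_floor this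
              _ = (n:ℤ) := Int.floor_intCast _
          · rw [hj₀]
            have : ((e x (tf γ)).im * n : ℝ) ≤ ((n:ℤ) : ℝ) := by push_cast; nlinarith
            calc ⌊(e x (tf γ)).im * (n:ℝ)⌋ ≤ ⌊((n:ℤ) : ℝ)⌋ := Int.floor_le_floor this
              _ = (n:ℤ) := Int.floor_intCast _
        have hsum : g γ = starRingEnd ℂ (c j₀) * e x γ := by
          rw [hgγ, Finset.sum_eq_single j₀]
          · have h1 : γ ∈ Cs j₀ := (hCsind j₀ γ).2 ⟨htA, rfl⟩
            rw [Set.indicator_of_mem h1, mul_one]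
          · intro j hj hne
            have h1 : γ ∉ Cs j := by
              intro h
              obtain ⟨-, h2⟩ := (hCsind j γ).1 h
              exact hne (by simpa using h2.symm)
            rw [Set.indicator_of_notMem h1, mul_zero, mul_zero]
          · intro h
            exact absurd hj₀mem h
        have hft : (A.indicator fun _ => (1:ℂ)) (tf γ) = 1 := Set.indicator_of_mem htA _
        have hdec : e x (γ - tf γ) = e x γ * starRingEnd ℂ (e x (tf γ)) := by
          have h1 : e x γ = e x (γ - tf γ) * e x (tf γ) := by
            rw [← he_addΓ, sub_add_cancel]
          rw [h1, mul_assoc, unit_mul_conj (he_norm x (tf γ)), mul_one]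
        have hVγ : (V (A.indicator fun _ => (1:ℂ))) γ = e x (γ - tf γ) := by
          rw [hVf, hft, mul_one]
        have hstep : ∀ a : ℝ, |a - ((⌊a * n⌋ : ℤ) : ℝ) / n| ≤ 1 / n := by
          intro a
          have h1 : ((⌊a * n⌋ : ℤ) : ℝ) ≤ a * n := Int.floor_le _
          have h2 : a * (n:ℝ) < ⌊a * n⌋ + 1 := Int.lt_floor_add_one _
          have e1 : a - ((⌊a * n⌋ : ℤ) : ℝ) / n = (a * n - ⌊a * n⌋) / n := by field_simp
          rw [e1, abs_div, abs_of_pos hn0, div_le_div_iff₀ hn0 hn0]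
          have h7 : |a * (n:ℝ) - ((⌊a * n⌋ : ℤ) : ℝ)| ≤ 1 := by
            rw [abs_le]
            constructor <;> nlinarith
          exact mul_le_mul_of_nonneg_right h7 hn0.le
        have hcj : ‖e x (tf γ) - c j₀‖ ≤ 2 / n := by
          set z := e x (tf γ) with hz
          have hzre : (z - c j₀).re = z.re - ((⌊z.re * n⌋ : ℤ) : ℝ) / n := rfl
          have hzim : (z - c j₀).im = z.im - ((⌊z.im * n⌋ : ℤ) : ℝ) / n := rfl
          have h3 : ‖z - c j₀‖ ≤ |(z - c j₀).re| + |(z - c j₀).im| := by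
            exact Complex.norm_le_abs_re_add_abs_im _
          have h4 := hstep z.re
          have h5 := hstep z.im
          rw [hzre] at h3
          rw [hzim] at h3
          have h6 : (1:ℝ)/n + 1/n = 2/n := by ring
          calc ‖z - c j₀‖ ≤ |z.re - ((⌊z.re * n⌋ : ℤ) : ℝ) / n| + |z.im - ((⌊z.im * n⌋ : ℤ) : ℝ) / n| := h3
            _ ≤ 1/n + 1/n := add_le_add h4 h5
            _ = 2/n := h6
        calc ‖(V (A.indicator fun _ => (1:ℂ)) - g) γ‖
            = ‖e x (γ - tf γ) - starRingEnd ℂ (c j₀) * e x γ‖ := by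
              rw [Pi.sub_apply, hVγ, hsum]
          _ = ‖e x γ * (starRingEnd ℂ (e x (tf γ)) - starRingEnd ℂ (c j₀))‖ := by
              rw [hdec]; ring_nf
          _ = ‖starRingEnd ℂ (e x (tf γ) - c j₀)‖ := by
              rw [norm_mul, he_norm, one_mul, map_sub]
          _ = ‖e x (tf γ) - c j₀‖ := by
              rw [show starRingEnd ℂ (e x (tf γ) - c j₀) = star (e x (tf γ) - c j₀) from rfl,
                norm_star]
          _ ≤ 2 / n := hcj
          _ ≤ d := h2nd
      · have h0 : (V (A.indicator fun _ => (1:ℂ))) γ = 0 := by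
          rw [hVf, Set.indicator_of_notMem htA, mul_zero]
        have hg0 : g γ = 0 := by
          rw [hgγ]
          refine Finset.sum_eq_zero fun j hj => ?_
          have h1 : γ ∉ Cs j := fun h => htA ((hCsind j γ).1 h).1
          rw [Set.indicator_of_notMem h1, mul_zero, mul_zero]
        rw [Pi.sub_apply, h0, hg0, sub_zero, norm_zero]
        exact hd0.le
    calc eLpNorm (V (A.indicator fun _ => (1:ℂ)) - g) α μ
        ≤ μ univ ^ α.toReal⁻¹ * ENNReal.ofReal d :=
          eLpNorm_le_of_ae_bound (Filter.Eventually.of_forall hpt)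
      _ < δ := hdM
  -- simple functions
  have hsimple : ∀ ψ : SimpleFunc Γ ℂ, memCl e H α μ x (V ⇑ψ) := by
    intro ψ
    induction ψ using SimpleFunc.induction with
    | const cc hs =>
      rename_i s
      have h1 : ⇑(SimpleFunc.piecewise s hs (SimpleFunc.const Γ cc) (SimpleFunc.const Γ 0)) =
          s.indicator fun _ => cc := by
        funext γ
        simp [SimpleFunc.piecewise_apply, Set.indicator_apply]
      rw [h1]
      have h2 : V (s.indicator fun _ => cc) =
          cc • V ((s ∩ T).indicator fun _ => (1:ℂ)) := by
        funext γ
        rw [Pi.smul_apply, hVf, hVf, smul_eq_mul]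
        by_cases h : tf γ ∈ s
        · have h3 : tf γ ∈ s ∩ T := ⟨h, htfT γ⟩
          rw [Set.indicator_of_mem h, Set.indicator_of_mem h3]
          ring
        · have h3 : tf γ ∉ s ∩ T := fun hh => h hh.1
          rw [Set.indicator_of_notMem h, Set.indicator_of_notMem h3]
          ring
      rw [h2]
      exact hAp_smul cc (hcore (s ∩ T) (hs.inter hT) inter_subset_right)
    | add hdisj ihf ihg =>
      rename_i f' g'
      have h1 : V ⇑(f' + g') = V ⇑f' + V ⇑g' := by
        funext γ
        rw [Pi.add_apply, hVf, hVf, hVf, SimpleFunc.coe_add, Pi.add_apply]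
        ring
      rw [h1]
      exact hAp_add ihf ihg
  -- V φ is in the closure for every φ ∈ L^α(ν)
  have hApV : ∀ φ : Γ → ℂ, MemLp φ α ν → memCl e H α μ x (V φ) := by
    intro φ hφ
    have hm : MemLp (V φ) α μ := ⟨hVaesm hφ.1, by rw [hiso φ]; exact hφ.2⟩
    refine hAp_close hm ?_
    intro δ hδ
    obtain ⟨ψ, hψerr, hψmem⟩ := hφ.exists_simpleFunc_eLpNorm_sub_lt hαtop hδ.ne'
    refine ⟨V ⇑ψ, hsimple ψ, ?_⟩
    have h1 : V φ - V ⇑ψ = V (φ - ⇑ψ) := by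
      funext γ
      rw [Pi.sub_apply, hVf, hVf, hVf, Pi.sub_apply]
      ring
    rw [h1, hiso]
    exact hψerr
  refine ⟨fun φ hφ => ⟨(hApV φ hφ).1, hiso φ, hApV φ hφ⟩, ?_, part3⟩
  -- Part 2: surjectivity
  intro f hf
  obtain ⟨hfmem, hfappr⟩ := hf
  have hseq : ∀ k : ℕ, ∃ p ∈ trigPoly e H x, eLpNorm (f - p) α μ < (2⁻¹ : ℝ≥0∞) ^ k := by
    intro k
    refine hfappr _ (ENNReal.pow_pos ?_ k)
    norm_num
  choose p hpmem hperr using hseq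
  have hptend : Tendsto (fun k => eLpNorm (p k - f) α μ) atTop (𝓝 0) := by
    have h1 : Tendsto (fun k : ℕ => (2⁻¹ : ℝ≥0∞) ^ k) atTop (𝓝 0) :=
      ENNReal.tendsto_pow_atTop_nhds_zero_of_lt_one (by norm_num)
    refine tendsto_of_tendsto_of_tendsto_of_le_of_le tendsto_const_nhds h1
      (fun k => zero_le) (fun k => ?_)
    rw [eLpNorm_sub_comm]
    exact (hperr k).le
  have htim : TendstoInMeasure μ (fun k => p k) atTop f :=
    tendstoInMeasure_of_tendsto_eLpNorm hαne
      (fun k => (hPcont _ (hpmem k)).aestronglyMeasurable) hfmem.1 hptend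
  obtain ⟨ns, -, hae⟩ := htim.exists_seq_tendsto_ae
  set q : ℕ → Γ → ℂ := fun k => p (ns k) with hq
  have hqcont : ∀ k, Continuous (q k) := fun k => hPcont _ (hpmem (ns k))
  have hqcov : ∀ k γ, q k γ = e x (γ - tf γ) * q k (tf γ) := by
    intro k γ
    calc q k γ = q k ((γ - tf γ) + tf γ) := by rw [sub_add_cancel]
      _ = e x (γ - tf γ) * q k (tf γ) := hcovP _ (hpmem (ns k)) ⟨γ - tf γ, htfΛ γ⟩ (tf γ)
  set φ : Γ → ℂ := fun γ =>
    if h : ∃ cc : ℂ, Tendsto (fun k => q k γ) atTop (𝓝 cc) then h.choose else 0 with hφdef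
  have hconv₁ : ∀ γ, (∃ cc : ℂ, Tendsto (fun k => q k (tf γ)) atTop (𝓝 cc)) →
      (∃ cc : ℂ, Tendsto (fun k => q k γ) atTop (𝓝 cc)) := by
    rintro γ ⟨cc, hcc⟩
    refine ⟨e x (γ - tf γ) * cc, ?_⟩
    have h2 := hcc.const_mul (e x (γ - tf γ))
    have h3 : (fun k => e x (γ - tf γ) * q k (tf γ)) = fun k => q k γ := by
      funext k
      exact (hqcov k γ).symm
    rwa [h3] at h2
  have hconv₂ : ∀ γ, (∃ cc : ℂ, Tendsto (fun k => q k γ) atTop (𝓝 cc)) →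
      (∃ cc : ℂ, Tendsto (fun k => q k (tf γ)) atTop (𝓝 cc)) := by
    rintro γ ⟨cc, hcc⟩
    refine ⟨(e x (γ - tf γ))⁻¹ * cc, ?_⟩
    have h2 := hcc.const_mul ((e x (γ - tf γ))⁻¹)
    have h3 : (fun k => (e x (γ - tf γ))⁻¹ * q k γ) = fun k => q k (tf γ) := by
      funext k
      rw [hqcov k γ, ← mul_assoc, inv_mul_cancel₀ (hene _ _), one_mul]
    rwa [h3] at h2
  have hφcov : ∀ γ, φ γ = e x (γ - tf γ) * φ (tf γ) := by
    intro γ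
    by_cases h : ∃ cc : ℂ, Tendsto (fun k => q k (tf γ)) atTop (𝓝 cc)
    · have hγ := hconv₁ γ h
      rw [hφdef]
      simp only [dif_pos hγ, dif_pos h]
      refine tendsto_nhds_unique hγ.choose_spec ?_
      have h4 := h.choose_spec.const_mul (e x (γ - tf γ))
      have h5 : (fun k => e x (γ - tf γ) * q k (tf γ)) = fun k => q k γ := by
        funext k
        exact (hqcov k γ).symm
      rwa [h5] at h4
    · have hγ : ¬ ∃ cc : ℂ, Tendsto (fun k => q k γ) atTop (𝓝 cc) := fun hh => h (hconv₂ γ hh)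
      rw [hφdef]
      simp only [dif_neg hγ, dif_neg h, mul_zero]
  have hVφ : V φ = φ := by
    funext γ
    rw [hVf φ γ, ← hφcov γ]
  have hφmeas : Measurable φ := by
    have hScm : MeasurableSet {γ : Γ | ∃ cc : ℂ, Tendsto (fun k => q k γ) atTop (𝓝 cc)} :=
      measurableSet_exists_tendsto fun k => (hqcont k).measurable
    refine measurable_of_tendsto_metrizable' atTop
      (f := fun k => ({γ : Γ | ∃ cc : ℂ, Tendsto (fun k => q k γ) atTop (𝓝 cc)}).indicator (q k))
      (fun k => (hqcont k).measurable.indicator hScm) ?_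
    rw [tendsto_pi_nhds]
    intro γ
    by_cases h : γ ∈ {γ : Γ | ∃ cc : ℂ, Tendsto (fun k => q k γ) atTop (𝓝 cc)}
    · have h1 : ∀ k, ({γ : Γ | ∃ cc : ℂ, Tendsto (fun k => q k γ) atTop (𝓝 cc)}).indicator
          (q k) γ = q k γ := fun k => Set.indicator_of_mem h _
      simp only [h1]
      have h2 : ∃ cc : ℂ, Tendsto (fun k => q k γ) atTop (𝓝 cc) := h
      rw [hφdef]
      simp only [dif_pos h2]
      exact h2.choose_spec
    · have h1 : ∀ k, ({γ : Γ | ∃ cc : ℂ, Tendsto (fun k => q k γ) atTop (𝓝 cc)}).indicator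
          (q k) γ = 0 := fun k => Set.indicator_of_notMem h _
      simp only [h1]
      have h2 : ¬ ∃ cc : ℂ, Tendsto (fun k => q k γ) atTop (𝓝 cc) := h
      rw [hφdef]
      simp only [dif_neg h2]
      exact tendsto_const_nhds
  have hφf : φ =ᵐ[μ] f := by
    filter_upwards [hae] with γ hγ
    have h : ∃ cc : ℂ, Tendsto (fun k => q k γ) atTop (𝓝 cc) := ⟨f γ, hγ⟩
    rw [hφdef]
    simp only [dif_pos h]
    exact tendsto_nhds_unique h.choose_spec hγ
  refine ⟨φ, ⟨hφmeas.aestronglyMeasurable, ?_⟩, ?_⟩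
  · have h1 : eLpNorm φ α ν = eLpNorm (V φ) α μ := (hiso φ).symm
    rw [h1, hVφ, eLpNorm_congr_ae hφf]
    exact hfmem.2
  · rw [hVφ]
    exact hφf
end

section
/- Let G be an LCA group, H a closed subgroup with countable annihilator Λ in the dual Γ. If for some λ ∈ Λ the density h_λ = dν_λ/dν equals 1 on a set B ⊆ T with ν(B) > 0, then the indicator function 1_{λ + B} is a nonzero element of the L^α(μ)-closure of P(x̃) for every x̃ ∈ G/H; in particular μ is not H-regular. -/
open MeasureTheory Set Pointwise
open scoped ENNReal

/-- Stone–Weierstrass approximation helper. -/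
lemma swApprox {X : Type*} [TopologicalSpace X] [CompactSpace X]
    (A : StarSubalgebra ℂ C(X, ℂ)) (hA : A.SeparatesPoints) (f : C(X, ℂ)) {s : ℝ}
    (hs : 0 < s) : ∃ g ∈ A, ∀ t, ‖f t - g t‖ ≤ s := by
  have h := ContinuousMap.starSubalgebra_topologicalClosure_eq_top_of_separatesPoints A hA
  have hf : f ∈ closure (A : Set C(X, ℂ)) := by
    have : f ∈ A.topologicalClosure := by rw [h]; trivial
    exact this
  obtain ⟨g, hgA, hg⟩ := Metric.mem_closure_iff.mp hf s hs
  exact ⟨g, hgA, fun t => by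
    have := ContinuousMap.dist_apply_le_dist (f := f) (g := g) t
    rw [dist_eq_norm] at this
    exact this.trans hg.le⟩

/-- Tail of a finite `ℝ≥0∞` sum can be made small. -/
lemma tailSmall {ι : Type*} [Countable ι] (g : ι → ℝ≥0∞) (hg : ∑' i, g i ≠ ∞)
    {δ : ℝ≥0∞} (hδ : 0 < δ) :
    ∃ F : Finset ι, ∑' i : {x // x ∉ F}, g i < δ := by
  have := ENNReal.tendsto_tsum_compl_atTop_zero (f := g) hg
  have h2 := this.eventually (gt_mem_nhds hδ)
  exact h2.exists

set_option maxHeartbeats 2000000 in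
/-- If for some `λ ∈ Λ` the density `h_λ = dν_λ/dν` equals `1` on a set
`B ⊆ T` of positive `ν`-measure, then `1_{λ+B}` is a nonzero element of the
`L^α(μ)`-closure of `P(x̃)` for every `x̃ ∈ G/H`; in particular `μ` is not `H`-regular. -/
theorem stmt6 {G Γ : Type*}
    [AddCommGroup G] [TopologicalSpace G] [IsTopologicalAddGroup G] [T2Space G]
    [LocallyCompactSpace G]
    [AddCommGroup Γ] [TopologicalSpace Γ] [IsTopologicalAddGroup Γ] [T2Space Γ]
    [LocallyCompactSpace Γ] [MeasurableSpace Γ] [BorelSpace Γ]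
    (e : G → Γ → ℂ)
    (he_cont : ∀ x, Continuous (e x))
    (he_norm : ∀ x γ, ‖e x γ‖ = 1)
    (he_addG : ∀ x y γ, e (x + y) γ = e x γ * e y γ)
    (he_addΓ : ∀ x γ δ, e x (γ + δ) = e x γ * e x δ)
    (H : AddSubgroup G) (hHc : IsClosed (H : Set G))
    (Λ : AddSubgroup Γ) [Countable Λ]
    (hΛ : ∀ γ : Γ, γ ∈ Λ ↔ ∀ y ∈ H, e y γ = 1)
    (μ : Measure Γ) [IsFiniteMeasure μ] [μ.Regular]
    (α : ℝ≥0∞) (hα0 : 0 < α) (hαtop : α ≠ ∞)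
    (T : Set Γ) (hT : MeasurableSet T)
    (htrans : ∀ γ : Γ, ∃! t, t ∈ T ∧ γ - t ∈ Λ)
    (ν : Measure Γ)
    (hν : ν = Measure.sum fun l : Λ =>
      Measure.map (fun γ => γ - (l : Γ)) (μ.restrict ((l : Γ) +ᵥ T)))
    (h : Λ → Γ → ℝ≥0∞) (hmeas : ∀ l : Λ, Measurable (h l))
    (hh : ∀ l : Λ, Measure.map (fun γ => γ - (l : Γ)) (μ.restrict ((l : Γ) +ᵥ T)) =
      ν.withDensity (h l))
    (hh0 : ∀ l : Λ, ∀ γ ∉ T, h l γ = 0)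
    (l : Λ) (B : Set Γ) (hB : MeasurableSet B) (hBT : B ⊆ T)
    (hpos : 0 < ν B) (h1 : ∀ γ ∈ B, h l γ = 1) :
    (∀ x : G, memCl e H α μ x (Set.indicator ((l : Γ) +ᵥ B) (fun _ => (1 : ℂ)))) ∧
    ¬ (Set.indicator ((l : Γ) +ᵥ B) (fun _ => (1 : ℂ)) =ᵐ[μ] 0) ∧
    ¬ (∀ f : Γ → ℂ, (∀ x : G, memCl e H α μ x f) → f =ᵐ[μ] 0) := by
  classical
  -- ### basic set facts
  have hsub : ∀ (κ : Γ) (S : Set Γ), κ +ᵥ S = (fun γ => γ - κ) ⁻¹' S := by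
    intro κ S
    ext γ
    simp [Set.mem_vadd_set_iff_neg_vadd_mem, vadd_eq_add, sub_eq_neg_add]
  have hmsub : ∀ κ : Γ, Measurable (fun γ : Γ => γ - κ) := fun κ =>
    (continuous_id.sub continuous_const).measurable
  have hvmeas : ∀ (κ : Γ) (S : Set Γ), MeasurableSet S → MeasurableSet (κ +ᵥ S) := by
    intro κ S hS
    rw [hsub]
    exact hmsub κ hS
  have hmem_vadd : ∀ (κ γ : Γ) (S : Set Γ), γ ∈ κ +ᵥ S ↔ γ - κ ∈ S := by
    intro κ γ S
    rw [hsub]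
    rfl
  -- ### transversal facts
  have huniq : ∀ γ t₁ t₂ : Γ, t₁ ∈ T → t₂ ∈ T → γ - t₁ ∈ Λ → γ - t₂ ∈ Λ → t₁ = t₂ := by
    intro γ t₁ t₂ h1' h2' h3' h4'
    obtain ⟨t, _, hu⟩ := htrans γ
    exact (hu t₁ ⟨h1', h3'⟩).trans (hu t₂ ⟨h2', h4'⟩).symm
  have htKB : ∀ t ∈ T, ∀ κ : Λ, t + (κ : Γ) ∈ (l : Γ) +ᵥ B → κ = l ∧ t ∈ B := by
    intro t ht κ hmem
    rw [hmem_vadd] at hmem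
    have hbT : t + (κ : Γ) - (l : Γ) ∈ T := hBT hmem
    have h3' : t + (κ : Γ) - t ∈ Λ := by simpa using κ.2
    have h4' : t + (κ : Γ) - (t + (κ : Γ) - (l : Γ)) ∈ Λ := by
      simpa [sub_sub_cancel] using l.2
    have heq : t = t + (κ : Γ) - (l : Γ) := huniq (t + (κ : Γ)) t _ ht hbT h3' h4'
    have hκl : (κ : Γ) = (l : Γ) := by
      have h' := heq
      rw [add_sub_assoc] at h'
      exact sub_eq_zero.mp ((left_eq_add).mp h')
    refine ⟨SetLike.coe_eq_coe.mp hκl, ?_⟩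
    rw [← heq] at hmem
    exact hmem
  have hcover : (⋃ κ : Λ, (κ : Γ) +ᵥ T) = univ := by
    apply Set.eq_univ_of_forall
    intro γ
    obtain ⟨t, ⟨ht, hlam⟩, _⟩ := htrans γ
    refine Set.mem_iUnion.mpr ⟨⟨γ - t, hlam⟩, ?_⟩
    rw [hmem_vadd]
    simpa using ht
  have hdisj : Pairwise (Function.onFun Disjoint fun κ : Λ => (κ : Γ) +ᵥ T) := by
    intro κ κ' hne
    rw [Function.onFun, Set.disjoint_left]
    intro γ hγ hγ'
    rw [hmem_vadd] at hγ hγ'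
    have h3' : γ - (γ - (κ : Γ)) ∈ Λ := by simpa [sub_sub_cancel] using κ.2
    have h4' : γ - (γ - (κ' : Γ)) ∈ Λ := by simpa [sub_sub_cancel] using κ'.2
    have := huniq γ _ _ hγ hγ' h3' h4'
    have : (κ : Γ) = (κ' : Γ) := by
      exact sub_right_inj.mp this
    exact hne (SetLike.coe_eq_coe.mp this)
  -- ### the μ-measure of translated subsets of T
  have hmapT : ∀ (κ : Λ) (S : Set Γ), MeasurableSet S → S ⊆ T →
      (Measure.map (fun γ => γ - (κ : Γ)) (μ.restrict ((κ : Γ) +ᵥ T))) S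
        = μ ((κ : Γ) +ᵥ S) := by
    intro κ S hS hST
    rw [Measure.map_apply (hmsub κ) hS, Measure.restrict_apply (hmsub κ hS)]
    rw [← hsub]
    congr 1
    apply Set.inter_eq_left.mpr
    intro γ hγ
    rw [hmem_vadd] at hγ ⊢
    exact hST hγ
  have hνsum : ∀ S : Set Γ, MeasurableSet S → S ⊆ T →
      ν S = ∑' κ : Λ, μ ((κ : Γ) +ᵥ S) := by
    intro S hS hST
    conv_lhs => rw [hν]
    rw [Measure.sum_apply _ hS]
    exact tsum_congr fun κ => hmapT κ S hS hST
  have hν_univ : ν univ ≠ ∞ := by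
    conv_lhs => rw [hν]
    rw [Measure.sum_apply _ MeasurableSet.univ]
    have heach : ∀ κ : Λ,
        (Measure.map (fun γ => γ - (κ : Γ)) (μ.restrict ((κ : Γ) +ᵥ T))) univ
          = μ ((κ : Γ) +ᵥ T) := by
      intro κ
      rw [Measure.map_apply (hmsub κ) MeasurableSet.univ]
      simp
    rw [tsum_congr heach, ← measure_iUnion hdisj fun κ => hvmeas _ T hT]
    exact measure_ne_top μ _
  have hνfin : ∀ S : Set Γ, ν S ≠ ∞ := fun S =>
    ne_top_of_le_ne_top hν_univ (measure_mono (subset_univ S))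
  -- ν as a sum of densities
  have hνm : ν = Measure.sum fun κ : Λ => ν.withDensity (h κ) := by
    conv_lhs => rw [hν]
    congr 1
    funext κ
    exact hh κ
  have hsumh : ∀ Gf : Γ → ℝ≥0∞, Measurable Gf →
      ∑' κ : Λ, ∫⁻ t, h κ t * Gf t ∂ν = ∫⁻ t, Gf t ∂ν := by
    intro Gf hGf
    have heach : ∀ κ : Λ, ∫⁻ t, h κ t * Gf t ∂ν
        = ∫⁻ t, Gf t ∂(ν.withDensity (h κ)) := by
      intro κ
      rw [lintegral_withDensity_eq_lintegral_mul ν (hmeas κ) hGf]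
      rfl
    rw [tsum_congr heach, ← lintegral_sum_measure, ← hνm]
  -- ν S = μ (l +ᵥ S) for S ⊆ B
  have hml : ∀ S : Set Γ, MeasurableSet S → S ⊆ B → μ ((l : Γ) +ᵥ S) = ν S := by
    intro S hS hSB
    rw [← hmapT l S hS (hSB.trans hBT), hh l, withDensity_apply _ hS]
    calc ∫⁻ γ in S, h l γ ∂ν = ∫⁻ _ in S, 1 ∂ν := by
          apply setLIntegral_congr_fun hS
          exact fun γ hγ => h1 γ (hSB hγ)
      _ = ν S := by simp
  have hμlB : μ ((l : Γ) +ᵥ B) = ν B := hml B hB (subset_refl B)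
  -- the other densities vanish on B
  have hrest0 : ∑' κ : Λ, (if κ = l then 0 else ν.withDensity (h κ) B) = 0 := by
    have hNB : ν B = ∑' κ : Λ, ν.withDensity (h κ) B := by
      conv_lhs => rw [hνm]
      rw [Measure.sum_apply _ hB]
    have hmlB : ν.withDensity (h l) B = ν B := by
      rw [← hh l, hmapT l B hB hBT, hμlB]
    have hsplit : (∑' κ : Λ, ν.withDensity (h κ) B)
        = ν.withDensity (h l) B
          + ∑' κ : Λ, (if κ = l then 0 else ν.withDensity (h κ) B) :=
      ENNReal.summable.tsum_eq_add_tsum_ite' l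
    have hkey : ν B = ν B + ∑' κ : Λ, (if κ = l then 0 else ν.withDensity (h κ) B) := by
      conv_lhs => rw [hNB]
      rw [hsplit, hmlB]
    exact ((ENNReal.add_right_inj (hνfin B)).mp ((add_zero (ν B)).trans hkey)).symm
  -- ### second conjunct
  have conj2 : ¬ (Set.indicator ((l : Γ) +ᵥ B) (fun _ => (1 : ℂ)) =ᵐ[μ] 0) := by
    intro hae
    have hz : μ ((l : Γ) +ᵥ B) = 0 := by
      have hset : {γ | Set.indicator ((l : Γ) +ᵥ B) (fun _ => (1 : ℂ)) γ ≠ 0}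
          = (l : Γ) +ᵥ B := by
        ext γ
        by_cases hγ : γ ∈ (l : Γ) +ᵥ B <;> simp [Set.indicator_apply, hγ]
      have h0 := hae
      rw [Filter.EventuallyEq, ae_iff] at h0
      simpa [hset] using h0
    rw [hμlB] at hz
    exact absurd hz hpos.ne'
  -- ### character identities
  have henz : ∀ (x' : G) (γ : Γ), e x' γ ≠ 0 := by
    intro x' γ h0
    have := he_norm x' γ
    rw [h0] at this
    simp at this
  have he0 : ∀ γ : Γ, e 0 γ = 1 := by
    intro γ
    have h' := he_addG 0 0 γ
    rw [add_zero] at h'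
    exact (mul_left_cancel₀ (henz 0 γ) ((mul_one (e 0 γ)).trans h')).symm
  have heinv : ∀ (x' : G) (γ : Γ), e x' γ * e (-x') γ = 1 := by
    intro x' γ
    rw [← he_addG, add_neg_cancel, he0]
  have heconj : ∀ (y : G) (γ : Γ), (starRingEnd ℂ) (e y γ) = e (-y) γ := by
    intro y γ
    have h1' : e y γ * (starRingEnd ℂ) (e y γ) = 1 := by
      rw [Complex.mul_conj]
      norm_cast
      rw [← Complex.sq_norm]
      have := he_norm y γ
      rw [this]; norm_num
    exact mul_left_cancel₀ (henz y γ) (h1'.trans (heinv y γ).symm)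
  -- ### the span of the characters coming from H
  set SpanE : Submodule ℂ (Γ → ℂ) :=
    Submodule.span ℂ {f : Γ → ℂ | ∃ y ∈ H, f = e y} with hSpanE
  have hgen : ∀ y ∈ H, e y ∈ SpanE := fun y hy =>
    Submodule.subset_span ⟨y, hy, rfl⟩
  have hS_cont : ∀ q ∈ SpanE, Continuous q := by
    intro q hq
    induction hq using Submodule.span_induction with
    | mem f hf => obtain ⟨y, _, rfl⟩ := hf; exact he_cont y
    | zero => exact continuous_const
    | add f g _ _ hf hg => exact hf.add hg
    | smul c f _ hf => exact continuous_const.mul hf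
  have hS_bdd : ∀ q ∈ SpanE, ∃ M : ℝ, ∀ γ, ‖q γ‖ ≤ M := by
    intro q hq
    induction hq using Submodule.span_induction with
    | mem f hf => exact ⟨1, by obtain ⟨y, _, rfl⟩ := hf; intro γ; rw [he_norm]⟩
    | zero => exact ⟨0, by simp⟩
    | add f g _ _ hf hg =>
        obtain ⟨M1, h1'⟩ := hf; obtain ⟨M2, h2'⟩ := hg
        exact ⟨M1 + M2, fun γ => (norm_add_le _ _).trans (add_le_add (h1' γ) (h2' γ))⟩
    | smul c f _ hf =>
        obtain ⟨M, hM⟩ := hf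
        refine ⟨‖c‖ * M, fun γ => ?_⟩
        rw [Pi.smul_apply, norm_smul]
        exact mul_le_mul_of_nonneg_left (hM γ) (norm_nonneg c)
  have hS_per : ∀ q ∈ SpanE, ∀ κ : Λ, ∀ γ : Γ, q (γ + (κ : Γ)) = q γ := by
    intro q hq
    induction hq using Submodule.span_induction with
    | mem f hf =>
        obtain ⟨y, hy, rfl⟩ := hf
        intro κ γ
        rw [he_addΓ, (hΛ κ).mp κ.2 y hy, mul_one]
    | zero => intro κ γ; rfl
    | add f g _ _ hf hg => intro κ γ; simp only [Pi.add_apply, hf κ γ, hg κ γ]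
    | smul c f _ hf => intro κ γ; simp only [Pi.smul_apply, hf κ γ]
  have hS_mul : ∀ q₁ ∈ SpanE, ∀ q₂ ∈ SpanE, (fun γ => q₁ γ * q₂ γ) ∈ SpanE := by
    intro q₁ hq₁
    induction hq₁ using Submodule.span_induction with
    | mem f hf =>
        obtain ⟨y, hy, rfl⟩ := hf
        intro q₂ hq₂
        induction hq₂ using Submodule.span_induction with
        | mem g hg =>
            obtain ⟨z, hz, rfl⟩ := hg
            have heq : (fun γ => e y γ * e z γ) = e (y + z) := by
              funext γ; rw [he_addG]
            rw [heq]
            exact hgen _ (H.add_mem hy hz)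
        | zero =>
            convert SpanE.zero_mem using 1
            funext γ; simp
        | add f' g' _ _ hf' hg' =>
            have heq : (fun γ => e y γ * (f' + g') γ)
                = (fun γ => e y γ * f' γ) + (fun γ => e y γ * g' γ) := by
              funext γ; simp [mul_add]
            rw [heq]; exact SpanE.add_mem hf' hg'
        | smul c f' _ hf' =>
            have heq : (fun γ => e y γ * (c • f') γ) = c • (fun γ => e y γ * f' γ) := by
              funext γ; simp; ring
            rw [heq]; exact SpanE.smul_mem c hf'
    | zero =>
        intro q₂ _
        convert SpanE.zero_mem using 1
        funext γ; simp
    | add f g _ _ hf hg =>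
        intro q₂ hq₂
        have heq : (fun γ => (f + g) γ * q₂ γ)
            = (fun γ => f γ * q₂ γ) + (fun γ => g γ * q₂ γ) := by
          funext γ; simp [add_mul]
        rw [heq]; exact SpanE.add_mem (hf q₂ hq₂) (hg q₂ hq₂)
    | smul c f _ hf =>
        intro q₂ hq₂
        have heq : (fun γ => (c • f) γ * q₂ γ) = c • fun γ => f γ * q₂ γ := by
          funext γ; simp; ring
        rw [heq]; exact SpanE.smul_mem c (hf q₂ hq₂)
  have hS_star : ∀ q ∈ SpanE, (fun γ => (starRingEnd ℂ) (q γ)) ∈ SpanE := by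
    intro q hq
    induction hq using Submodule.span_induction with
    | mem f hf =>
        obtain ⟨y, hy, rfl⟩ := hf
        have heq : (fun γ => (starRingEnd ℂ) (e y γ)) = e (-y) := by
          funext γ; rw [heconj]
        rw [heq]; exact hgen _ (H.neg_mem hy)
    | zero =>
        convert SpanE.zero_mem using 1
        funext γ; simp
    | add f g _ _ hf hg =>
        have heq : (fun γ => (starRingEnd ℂ) ((f + g) γ))
            = (fun γ => (starRingEnd ℂ) (f γ)) + fun γ => (starRingEnd ℂ) (g γ) := by
          funext γ; simp
        rw [heq]; exact SpanE.add_mem hf hg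
    | smul c f _ hf =>
        have heq : (fun γ => (starRingEnd ℂ) ((c • f) γ))
            = (starRingEnd ℂ c) • fun γ => (starRingEnd ℂ) (f γ) := by
          funext γ; simp
        rw [heq]; exact SpanE.smul_mem _ hf
  have hS_one : (fun _ : Γ => (1 : ℂ)) ∈ SpanE := by
    have heq : (fun _ : Γ => (1 : ℂ)) = e 0 := by funext γ; rw [he0]
    rw [heq]; exact hgen 0 H.zero_mem
  have hS_const : ∀ c : ℂ, (fun _ : Γ => c) ∈ SpanE := by
    intro c
    have heq : (fun _ : Γ => c) = c • fun _ : Γ => (1 : ℂ) := by funext γ; simp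
    rw [heq]; exact SpanE.smul_mem c hS_one
  -- ### main approximation statement
  have conj1 : ∀ x : G, memCl e H α μ x
      (Set.indicator ((l : Γ) +ᵥ B) (fun _ => (1 : ℂ))) := by
    intro x
    set f : Γ → ℂ := Set.indicator ((l : Γ) +ᵥ B) (fun _ => (1 : ℂ)) with hfdef
    have hf_meas : Measurable f := measurable_const.indicator (hvmeas _ B hB)
    constructor
    · exact memLp_indicator_const α (hvmeas _ B hB) 1 (Or.inr (measure_ne_top μ _))
    intro ε hε
    have hS_toTrig : ∀ q ∈ SpanE, (fun γ => e x γ * q γ) ∈ trigPoly e H x := by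
      intro q hq
      induction hq using Submodule.span_induction with
      | mem g hg =>
          obtain ⟨y, hy, rfl⟩ := hg
          have heq : (fun γ => e x γ * e y γ) = e (x + y) := by
            funext γ; rw [he_addG]
          rw [heq]
          exact Submodule.subset_span ⟨y, hy, rfl⟩
      | zero =>
          convert (Submodule.span ℂ {f : Γ → ℂ | ∃ y ∈ H, f = e (x + y)}).zero_mem using 1
          rw [show (fun γ => e x γ * (0 : Γ → ℂ) γ) = 0 from by funext γ; simp]; exact Iff.rfl
      | add g g' _ _ hg hg' =>
          have heq : (fun γ => e x γ * (g + g') γ)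
              = (fun γ => e x γ * g γ) + fun γ => e x γ * g' γ := by
            funext γ; simp [mul_add]
          rw [heq]
          exact (Submodule.span ℂ _).add_mem hg hg'
      | smul c g _ hg =>
          have heq : (fun γ => e x γ * (c • g) γ) = c • fun γ => e x γ * g γ := by
            funext γ; simp; ring
          rw [heq]
          exact (Submodule.span ℂ _).smul_mem c hg
    -- numerical setup
    set ar : ℝ := α.toReal with hardef
    have har : 0 < ar := ENNReal.toReal_pos hα0.ne' hαtop
    set ε₀ : ℝ≥0∞ := min ε 1 with hε₀def
    have hε₀0 : 0 < ε₀ := lt_min hε zero_lt_one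
    have hε₀top : ε₀ ≠ ∞ := ne_top_of_le_ne_top ENNReal.one_ne_top (min_le_right _ _)
    set Tgt : ℝ≥0∞ := ε₀ ^ ar with hTgtdef
    have hTgt0 : 0 < Tgt := ENNReal.rpow_pos hε₀0 hε₀top
    have hTgttop : Tgt ≠ ∞ := ENNReal.rpow_ne_top_of_nonneg har.le hε₀top
    set Q : ℝ≥0∞ := Tgt / 4 with hQdef
    have hQ0 : 0 < Q := ENNReal.div_pos hTgt0.ne' (by norm_num)
    have hQtop : Q ≠ ∞ := by
      rw [hQdef]
      exact (ENNReal.div_lt_top hTgttop (by norm_num)).ne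
    set C : ℝ≥0∞ := ν univ + 1 with hCdef
    have hC0 : C ≠ 0 := by simp [hCdef]
    have hCtop : C ≠ ∞ := by
      rw [hCdef]
      exact ENNReal.add_ne_top.mpr ⟨hν_univ, ENNReal.one_ne_top⟩
    set ρ : ℝ≥0∞ := Q / C with hρdef
    have hρ0 : 0 < ρ := ENNReal.div_pos hQ0.ne' hCtop
    set z : ℝ≥0∞ := (min ρ 1) ^ (1 / ar) with hzdef
    have hmin0 : 0 < min ρ 1 := lt_min hρ0 zero_lt_one
    have hmintop : min ρ 1 ≠ ∞ := ne_top_of_le_ne_top ENNReal.one_ne_top (min_le_right _ _)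
    have hz0 : 0 < z := ENNReal.rpow_pos hmin0 hmintop
    have hztop : z ≠ ∞ := ENNReal.rpow_ne_top_of_nonneg (by positivity) hmintop
    have hzpow : z ^ ar ≤ ρ := by
      rw [hzdef, ← ENNReal.rpow_mul, one_div, inv_mul_cancel₀ har.ne', ENNReal.rpow_one]
      exact min_le_left _ _
    set s : ℝ := min (z.toReal / 2) 4⁻¹ with hsdef
    have hs0 : 0 < s := by
      apply lt_min _ (by norm_num)
      have := ENNReal.toReal_pos hz0.ne' hztop
      linarith
    have hs4 : s ≤ 4⁻¹ := min_le_right _ _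
    have hssz : ENNReal.ofReal (s + s) ≤ z := by
      apply ENNReal.ofReal_le_of_le_toReal
      have := min_le_left (z.toReal / 2) 4⁻¹
      rw [hsdef]
      linarith
    set cδ : ℝ≥0∞ := 3 ^ ar + 2 ^ ar + 1 with hcδdef
    have hcδ0 : cδ ≠ 0 := by simp [hcδdef]
    have hcδtop : cδ ≠ ∞ := by
      rw [hcδdef]
      refine ENNReal.add_ne_top.mpr ⟨ENNReal.add_ne_top.mpr ⟨?_, ?_⟩, ENNReal.one_ne_top⟩
      · exact ENNReal.rpow_ne_top_of_nonneg har.le (by norm_num)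
      · exact ENNReal.rpow_ne_top_of_nonneg har.le (by norm_num)
    set δm : ℝ≥0∞ := Q / cδ with hδmdef
    have hδm0 : 0 < δm := ENNReal.div_pos hQ0.ne' hcδtop
    have hδmQ : cδ * δm = Q := by
      rw [hδmdef]
      exact ENNReal.mul_div_cancel hcδ0 hcδtop
    have hδmtop : δm ≠ ∞ := by
      rw [hδmdef]
      exact (ENNReal.div_lt_top hQtop hcδ0).ne
    have h3δm : (3 : ℝ≥0∞) ^ ar * δm ≤ Q := by
      rw [← hδmQ]
      apply mul_le_mul_left
      rw [hcδdef]
      calc (3 : ℝ≥0∞) ^ ar ≤ 3 ^ ar + 2 ^ ar := le_add_right (le_refl _)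
        _ ≤ 3 ^ ar + 2 ^ ar + 1 := le_add_right (le_refl _)
    have h2δm : (2 : ℝ≥0∞) ^ ar * δm ≤ Q := by
      rw [← hδmQ]
      apply mul_le_mul_left
      rw [hcδdef]
      calc (2 : ℝ≥0∞) ^ ar ≤ 3 ^ ar + 2 ^ ar := le_add_left (le_refl _)
        _ ≤ 3 ^ ar + 2 ^ ar + 1 := le_add_right (le_refl _)
    -- ### compact K₁ inside B
    obtain ⟨C₁, hC₁sub, hC₁cpt, hC₁lt⟩ :=
      (hvmeas _ B hB).exists_isCompact_diff_lt (measure_ne_top μ _) hδm0.ne'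
    set K₁ : Set Γ := (fun γ => γ - (l : Γ)) '' C₁ with hK₁def
    have hK₁cpt : IsCompact K₁ := hC₁cpt.image (continuous_id.sub continuous_const)
    have hK₁B : K₁ ⊆ B := by
      rintro γ ⟨c, hc, rfl⟩
      have := hC₁sub hc
      rw [hmem_vadd] at this
      exact this
    have hK₁meas : MeasurableSet K₁ := hK₁cpt.isClosed.measurableSet
    have hνBK₁ : ν (B \ K₁) < δm := by
      have heq : μ ((l : Γ) +ᵥ (B \ K₁)) = ν (B \ K₁) :=
        hml _ (hB.diff hK₁meas) diff_subset
      rw [← heq]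
      apply lt_of_le_of_lt _ hC₁lt
      apply measure_mono
      intro γ hγ
      rw [hmem_vadd] at hγ
      obtain ⟨hγB, hγK⟩ := hγ
      constructor
      · rw [hmem_vadd]; exact hγB
      · intro hγC
        exact hγK ⟨γ, hγC, rfl⟩
    -- ### compact K₂ inside T \ B
    have hTBmeas : MeasurableSet (T \ B) := hT.diff hB
    have hg2sum : ∑' κ : Λ, μ ((κ : Γ) +ᵥ (T \ B)) ≠ ∞ := by
      rw [← hνsum _ hTBmeas diff_subset]
      exact hνfin _
    obtain ⟨F, hFtail⟩ := tailSmall _ hg2sum (ENNReal.half_pos hδm0.ne')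
    have hchoice : ∀ κ : Λ, ∃ Cc, Cc ⊆ (κ : Γ) +ᵥ (T \ B) ∧ IsCompact Cc ∧
        μ (((κ : Γ) +ᵥ (T \ B)) \ Cc) < δm / 2 / (F.card + 1) := by
      intro κ
      have hp : (0 : ℝ≥0∞) < δm / 2 / (F.card + 1) := by
        apply ENNReal.div_pos (ENNReal.half_pos hδm0.ne').ne'
        exact ENNReal.add_ne_top.mpr ⟨ENNReal.natCast_ne_top _, ENNReal.one_ne_top⟩
      obtain ⟨Cc, h1'', h2'', h3''⟩ :=
        (hvmeas _ _ hTBmeas).exists_isCompact_diff_lt (measure_ne_top μ _) hp.ne'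
      exact ⟨Cc, h1'', h2'', h3''⟩
    choose Cc hCcsub hCccpt hCclt using hchoice
    set K₂ : Set Γ := ⋃ κ ∈ F, (fun γ => γ - (κ : Γ)) '' Cc κ with hK₂def
    have hK₂cpt : IsCompact K₂ := by
      apply F.finite_toSet.isCompact_biUnion
      intro κ _
      exact (hCccpt κ).image (continuous_id.sub continuous_const)
    have hK₂TB : K₂ ⊆ T \ B := by
      intro γ hγ
      rw [hK₂def, Set.mem_iUnion] at hγ
      obtain ⟨κ, hγ⟩ := hγ
      rw [Set.mem_iUnion] at hγ
      obtain ⟨_, c, hc, rfl⟩ := hγ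
      have := hCcsub κ hc
      rw [hmem_vadd] at this
      exact this
    have hK₂meas : MeasurableSet K₂ := hK₂cpt.isClosed.measurableSet
    have hνK₂ : ν ((T \ B) \ K₂) < δm := by
      rw [hνsum _ (hTBmeas.diff hK₂meas) (diff_subset.trans diff_subset)]
      have hbound : ∀ κ : Λ, μ ((κ : Γ) +ᵥ ((T \ B) \ K₂))
          ≤ (if κ ∈ F then δm / 2 / (F.card + 1) else 0)
            + (if κ ∈ F then 0 else μ ((κ : Γ) +ᵥ (T \ B))) := by
        intro κ
        by_cases hκF : κ ∈ F
        · simp only [hκF, if_true, add_zero]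
          apply le_of_lt
          apply lt_of_le_of_lt _ (hCclt κ)
          apply measure_mono
          intro γ hγ
          rw [hmem_vadd] at hγ
          obtain ⟨hγTB, hγK⟩ := hγ
          constructor
          · rw [hmem_vadd]; exact hγTB
          · intro hγC
            apply hγK
            rw [hK₂def, Set.mem_iUnion]
            exact ⟨κ, Set.mem_iUnion.mpr ⟨hκF, ⟨γ, hγC, rfl⟩⟩⟩
        · simp only [hκF, if_false, zero_add]
          apply measure_mono
          rw [hsub, hsub]
          apply Set.preimage_mono
          exact diff_subset
      calc ∑' κ : Λ, μ ((κ : Γ) +ᵥ ((T \ B) \ K₂))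
          ≤ ∑' κ : Λ, ((if κ ∈ F then δm / 2 / (F.card + 1) else 0)
            + (if κ ∈ F then 0 else μ ((κ : Γ) +ᵥ (T \ B)))) := ENNReal.tsum_le_tsum hbound
        _ = (∑' κ : Λ, (if κ ∈ F then δm / 2 / (F.card + 1) else 0))
            + ∑' κ : Λ, (if κ ∈ F then 0 else μ ((κ : Γ) +ᵥ (T \ B))) := ENNReal.tsum_add
        _ ≤ δm / 2 + ∑' κ : Λ, (if κ ∈ F then 0 else μ ((κ : Γ) +ᵥ (T \ B))) := by
            apply add_le_add_left
            rw [tsum_eq_sum (s := F) (fun κ hκ => by simp [hκ])]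
            calc ∑ κ ∈ F, (if κ ∈ F then δm / 2 / (F.card + 1) else 0)
                = ∑ κ ∈ F, δm / 2 / (F.card + 1) :=
                  Finset.sum_congr rfl fun κ hκ => by simp [hκ]
              _ = F.card * (δm / 2 / (F.card + 1)) := by
                  rw [Finset.sum_const, nsmul_eq_mul]
              _ ≤ (F.card + 1) * (δm / 2 / (F.card + 1)) := by
                  apply mul_le_mul_left
                  exact le_add_right (le_refl _)
              _ = δm / 2 := by
                  apply ENNReal.mul_div_cancel
                  · simp
                  · exact ENNReal.add_ne_top.mpr ⟨ENNReal.natCast_ne_top _, ENNReal.one_ne_top⟩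
        _ < δm / 2 + δm / 2 := by
            apply ENNReal.add_lt_add_left
            · exact ne_top_of_le_ne_top hδmtop ENNReal.half_le_self
            apply lt_of_le_of_lt _ hFtail
            apply le_of_eq
            calc ∑' κ : Λ, (if κ ∈ F then 0 else μ ((κ : Γ) +ᵥ (T \ B)))
                = ∑' κ : Λ, Set.indicator {κ : Λ | κ ∉ F}
                    (fun κ : Λ => μ ((κ : Γ) +ᵥ (T \ B))) κ :=
                  tsum_congr (fun κ => by
                    by_cases hκF : κ ∈ F <;> simp [Set.indicator_apply, hκF])
              _ = ∑' i : {κ : Λ // κ ∉ F}, μ ((i : Λ) +ᵥ (T \ B)) :=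
                  (tsum_subtype {κ : Λ | κ ∉ F}
                    (fun κ : Λ => μ ((κ : Γ) +ᵥ (T \ B)))).symm
        _ = δm := ENNReal.add_halves δm
    -- ### the compact set K and the target continuous function φ
    set K : Set Γ := K₁ ∪ K₂ with hKdef
    have hKcpt : IsCompact K := hK₁cpt.union hK₂cpt
    have hKT : K ⊆ T := by
      intro γ hγ
      rcases hγ with hγ | hγ
      · exact hBT (hK₁B hγ)
      · exact (hK₂TB hγ).1
    haveI hKcs : CompactSpace ↥K := isCompact_iff_compactSpace.mp hKcpt
    have hK₁K₂B : ∀ γ ∈ K, (γ ∈ B ↔ γ ∈ K₁) := by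
      intro γ hγ
      constructor
      · intro hγB
        rcases hγ with hγ | hγ
        · exact hγ
        · exact absurd hγB (hK₂TB hγ).2
      · exact fun hγ₁ => hK₁B hγ₁
    set w : Γ → ℂ := fun t => e (-x) (t + (l : Γ)) with hwdef
    have hw_cont : Continuous w := (he_cont (-x)).comp (continuous_add_right _)
    have hw_norm : ∀ t, ‖w t‖ = 1 := fun t => he_norm _ _
    have hclopen : IsClopen {t : ↥K | (t : Γ) ∈ B} := by
      have hset1 : {t : ↥K | (t : Γ) ∈ B} = Subtype.val ⁻¹' K₁ := by
        ext t
        exact hK₁K₂B _ t.2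
      have hset2 : {t : ↥K | (t : Γ) ∈ B}ᶜ = Subtype.val ⁻¹' K₂ := by
        ext t
        simp only [Set.mem_compl_iff, Set.mem_setOf_eq, Set.mem_preimage]
        constructor
        · intro htB
          rcases t.2 with ht | ht
          · exact absurd (hK₁B ht) htB
          · exact ht
        · intro ht
          exact (hK₂TB ht).2
      constructor
      · rw [hset1]
        exact hK₁cpt.isClosed.preimage continuous_subtype_val
      · rw [← isClosed_compl_iff, hset2]
        exact hK₂cpt.isClosed.preimage continuous_subtype_val
    have hφcont : Continuous fun t : ↥K => if (t : Γ) ∈ B then w t else 0 := by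
      apply Continuous.if
      · intro a ha
        rw [hclopen.frontier_eq] at ha
        exact absurd ha (Set.notMem_empty a)
      · exact hw_cont.comp continuous_subtype_val
      · exact continuous_const
    set φ : C(↥K, ℂ) := ⟨fun t => if (t : Γ) ∈ B then w t else 0, hφcont⟩ with hφdef
    -- ### the star subalgebra on K and first Stone–Weierstrass approximation
    set gensK : Set C(↥K, ℂ) :=
      {g | ∃ y ∈ H, g = ContinuousMap.mk (fun t : ↥K => e y t)
        ((he_cont y).comp continuous_subtype_val)} with hgensKdef
    set A_K : StarSubalgebra ℂ C(↥K, ℂ) := StarAlgebra.adjoin ℂ gensK with hA_Kdef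
    have hsepK : A_K.SeparatesPoints := by
      intro t t' hne
      have hvalne : (t : Γ) ≠ (t' : Γ) := fun hc => hne (Subtype.ext hc)
      have hnotΛ : (t : Γ) - (t' : Γ) ∉ Λ := by
        intro hmem
        have h3' : (t : Γ) - (t : Γ) ∈ Λ := by simpa using Λ.zero_mem
        exact hvalne (huniq (t : Γ) _ _ (hKT t.2) (hKT t'.2) h3' hmem)
      rw [hΛ] at hnotΛ
      push_neg at hnotΛ
      obtain ⟨y, hy, hyne⟩ := hnotΛ
      have hval : e y (t : Γ) ≠ e y (t' : Γ) := by
        intro hc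
        apply hyne
        have hexp : e y (t : Γ) = e y ((t : Γ) - (t' : Γ)) * e y (t' : Γ) := by
          rw [← he_addΓ, sub_add_cancel]
        rw [hexp] at hc
        have := mul_right_cancel₀ (henz y (t' : Γ)) (hc.trans (one_mul _).symm)
        exact this
      refine ⟨_, ⟨ContinuousMap.mk (fun u : ↥K => e y u)
        ((he_cont y).comp continuous_subtype_val), ?_, rfl⟩, hval⟩
      exact StarAlgebra.subset_adjoin ℂ gensK ⟨y, hy, rfl⟩
    have hrepK : ∀ g ∈ A_K, ∃ q ∈ SpanE, ∀ t : ↥K, g t = q (t : Γ) := by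
      intro g hg
      induction hg using StarAlgebra.adjoin_induction with
      | mem g hg =>
          obtain ⟨y, hy, rfl⟩ := hg
          exact ⟨e y, hgen y hy, fun t => rfl⟩
      | algebraMap c =>
          exact ⟨fun _ => c, hS_const c, fun t => rfl⟩
      | add g g' _ _ hg hg' =>
          obtain ⟨q1, hq1, hv1⟩ := hg
          obtain ⟨q2, hq2, hv2⟩ := hg'
          exact ⟨q1 + q2, SpanE.add_mem hq1 hq2, fun t => by
            simp [hv1 t, hv2 t]⟩
      | mul g g' _ _ hg hg' =>
          obtain ⟨q1, hq1, hv1⟩ := hg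
          obtain ⟨q2, hq2, hv2⟩ := hg'
          exact ⟨fun γ => q1 γ * q2 γ, hS_mul q1 hq1 q2 hq2, fun t => by
            simp [hv1 t, hv2 t]⟩
      | star g _ hg =>
          obtain ⟨q1, hq1, hv1⟩ := hg
          exact ⟨fun γ => (starRingEnd ℂ) (q1 γ), hS_star q1 hq1, fun t => by
            simp [hv1 t, Complex.star_def]⟩
    obtain ⟨g₁, hg₁A, hg₁⟩ := swApprox A_K hsepK φ hs0
    obtain ⟨q₀, hq₀S, hq₀val⟩ := hrepK g₁ hg₁A
    have hφq₀ : ∀ t : ↥K, ‖φ t - q₀ (t : Γ)‖ ≤ s := fun t => by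
      rw [← hq₀val t]; exact hg₁ t
    -- ### second Stone–Weierstrass approximation: truncation
    obtain ⟨M₀, hM₀⟩ := hS_bdd q₀ hq₀S
    set M : ℝ := max M₀ 2 with hMdef
    set D : Set ℂ := Metric.closedBall 0 M with hDdef
    have hDq₀ : ∀ γ, q₀ γ ∈ D := by
      intro γ
      rw [hDdef, mem_closedBall_zero_iff]
      exact (hM₀ γ).trans (le_max_left _ _)
    haveI hDcs : CompactSpace ↥D :=
      isCompact_iff_compactSpace.mp (isCompact_closedBall 0 M)
    set r : ℂ → ℂ := fun ζ => (((3 : ℝ) / 2) * (max ((3 : ℝ) / 2) ‖ζ‖)⁻¹) • ζ with hrdef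
    have hmaxpos : ∀ ζ : ℂ, (0 : ℝ) < max ((3 : ℝ) / 2) ‖ζ‖ := fun ζ =>
      lt_of_lt_of_le (by norm_num) (le_max_left _ _)
    have hr_cont : Continuous r := by
      rw [hrdef]
      apply Continuous.fun_smul _ continuous_id
      exact continuous_const.mul
        ((continuous_const.max continuous_norm).inv₀ fun ζ => (hmaxpos ζ).ne')
    have hr_bdd : ∀ ζ, ‖r ζ‖ ≤ (3 : ℝ) / 2 := by
      intro ζ
      rw [hrdef]
      simp only [norm_smul, Real.norm_eq_abs]
      rw [abs_of_nonneg (by positivity)]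
      rw [mul_assoc]
      have h1' : ‖ζ‖ ≤ max ((3 : ℝ) / 2) ‖ζ‖ := le_max_right _ _
      have h2' : (max ((3 : ℝ) / 2) ‖ζ‖)⁻¹ * ‖ζ‖ ≤ 1 := by
        rw [← div_eq_inv_mul]
        exact (div_le_one (hmaxpos ζ)).mpr h1'
      calc (3 : ℝ) / 2 * ((max ((3 : ℝ) / 2) ‖ζ‖)⁻¹ * ‖ζ‖) ≤ (3 : ℝ) / 2 * 1 := by
            apply mul_le_mul_of_nonneg_left h2' (by norm_num)
        _ = (3 : ℝ) / 2 := mul_one _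
    have hr_id : ∀ ζ : ℂ, ‖ζ‖ ≤ (3 : ℝ) / 2 → r ζ = ζ := by
      intro ζ hζ
      rw [hrdef]
      simp only
      rw [max_eq_left hζ, mul_inv_cancel₀ (by norm_num : ((3 : ℝ) / 2) ≠ 0), one_smul]
    set rD : C(↥D, ℂ) := ⟨fun ζ => r (ζ : ℂ), hr_cont.comp continuous_subtype_val⟩
      with hrDdef
    set idD : C(↥D, ℂ) := ⟨Subtype.val, continuous_subtype_val⟩ with hidDdef
    set A_D : StarSubalgebra ℂ C(↥D, ℂ) := StarAlgebra.adjoin ℂ {idD} with hA_Ddef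
    have hsepD : A_D.SeparatesPoints := by
      intro ζ ζ' hne
      refine ⟨_, ⟨idD, StarAlgebra.subset_adjoin ℂ _ rfl, rfl⟩, ?_⟩
      exact fun hc => hne (Subtype.ext hc)
    have hrepD : ∀ g ∈ A_D, (fun γ : Γ => g ⟨q₀ γ, hDq₀ γ⟩) ∈ SpanE := by
      intro g hg
      induction hg using StarAlgebra.adjoin_induction with
      | mem g hg =>
          rw [Set.mem_singleton_iff] at hg
          subst hg
          exact hq₀S
      | algebraMap c =>
          exact hS_const c
      | add g g' _ _ hg hg' =>
          exact SpanE.add_mem hg hg'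
      | mul g g' _ _ hg hg' =>
          exact hS_mul _ hg _ hg'
      | star g _ hg =>
          exact hS_star _ hg
    obtain ⟨g₂, hg₂A, hg₂⟩ := swApprox A_D hsepD rD hs0
    set q : Γ → ℂ := fun γ => g₂ ⟨q₀ γ, hDq₀ γ⟩ with hqdef
    have hqS : q ∈ SpanE := hrepD g₂ hg₂A
    have hq_cont : Continuous q := hS_cont q hqS
    set p : Γ → ℂ := fun γ => e x γ * q γ with hpdef
    have hpT : p ∈ trigPoly e H x := hS_toTrig q hqS
    have hp_cont : Continuous p := (he_cont x).mul hq_cont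
    -- ### bounds on q
    have hq2 : ∀ γ, ‖q γ‖ ≤ 2 := by
      intro γ
      have h2' := hg₂ ⟨q₀ γ, hDq₀ γ⟩
      have h3' : ‖q γ‖ ≤ ‖rD ⟨q₀ γ, hDq₀ γ⟩‖ + s := by
        calc ‖q γ‖ = ‖rD ⟨q₀ γ, hDq₀ γ⟩ - (rD ⟨q₀ γ, hDq₀ γ⟩ - g₂ ⟨q₀ γ, hDq₀ γ⟩)‖ := by
              rw [sub_sub_cancel]
          _ ≤ ‖rD ⟨q₀ γ, hDq₀ γ⟩‖ + ‖rD ⟨q₀ γ, hDq₀ γ⟩ - g₂ ⟨q₀ γ, hDq₀ γ⟩‖ :=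
              norm_sub_le _ _
          _ ≤ ‖rD ⟨q₀ γ, hDq₀ γ⟩‖ + s := by
              exact add_le_add_right h2' _
      have h4' : ‖rD ⟨q₀ γ, hDq₀ γ⟩‖ ≤ (3 : ℝ) / 2 := hr_bdd _
      have h5' : s ≤ 4⁻¹ := hs4
      linarith
    have hqK : ∀ γ (hγ : γ ∈ K), ‖(if γ ∈ B then w γ else 0) - q γ‖ ≤ s + s := by
      intro γ hγ
      have hφt : φ ⟨γ, hγ⟩ = if γ ∈ B then w γ else 0 := rfl
      have h1' : ‖(if γ ∈ B then w γ else 0) - q₀ γ‖ ≤ s := by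
        rw [← hφt]; exact hφq₀ ⟨γ, hγ⟩
      have hφ1 : ‖(if γ ∈ B then w γ else 0 : ℂ)‖ ≤ 1 := by
        by_cases hγB : γ ∈ B <;> simp [hγB, hw_norm]
      have h2' : ‖q₀ γ‖ ≤ (3 : ℝ) / 2 := by
        have := norm_sub_norm_le ((if γ ∈ B then w γ else 0 : ℂ)) (q₀ γ)
        have h4' : s ≤ 4⁻¹ := hs4
        calc ‖q₀ γ‖ ≤ ‖(if γ ∈ B then w γ else 0 : ℂ)‖
              + ‖(if γ ∈ B then w γ else 0) - q₀ γ‖ := by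
              have := norm_sub_le ((if γ ∈ B then w γ else 0 : ℂ))
                ((if γ ∈ B then w γ else 0) - q₀ γ)
              rw [sub_sub_cancel] at this
              exact this
          _ ≤ 1 + s := add_le_add hφ1 h1'
          _ ≤ (3 : ℝ) / 2 := by linarith
      have h3' : ‖q₀ γ - q γ‖ ≤ s := by
        have := hg₂ ⟨q₀ γ, hDq₀ γ⟩
        have hid : rD ⟨q₀ γ, hDq₀ γ⟩ = q₀ γ := hr_id _ h2'
        rw [hid] at this
        exact this
      calc ‖(if γ ∈ B then w γ else 0) - q γ‖
          ≤ ‖(if γ ∈ B then w γ else 0) - q₀ γ‖ + ‖q₀ γ - q γ‖ := by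
            have := dist_triangle ((if γ ∈ B then w γ else 0 : ℂ)) (q₀ γ) (q γ)
            rw [dist_eq_norm, dist_eq_norm, dist_eq_norm] at this
            exact this
        _ ≤ s + s := add_le_add h1' h3'
    -- ### the integral estimate
    set Φ : Γ → ℝ≥0∞ := fun γ => (‖f γ - p γ‖₊ : ℝ≥0∞) ^ ar with hΦdef
    set Ψ : Γ → ℝ≥0∞ := fun t => (‖q t‖₊ : ℝ≥0∞) ^ ar with hΨdef
    have hΦmeas : Measurable Φ :=
      ((hf_meas.sub hp_cont.measurable).nnnorm.coe_nnreal_ennreal).pow_const ar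
    have hΨmeas : Measurable Ψ :=
      (hq_cont.measurable.nnnorm.coe_nnreal_ennreal).pow_const ar
    -- pointwise values
    have hq_per : ∀ (t : Γ) (κ : Λ), q (t + (κ : Γ)) = q t := fun t κ =>
      hS_per q hqS κ t
    have hΦl : ∀ t ∈ B, Φ (t + (l : Γ)) = (‖w t - q t‖₊ : ℝ≥0∞) ^ ar := by
      intro t ht
      have hmem : t + (l : Γ) ∈ (l : Γ) +ᵥ B := by
        rw [hmem_vadd]
        simpa [add_sub_cancel_right] using ht
      have hfv : f (t + (l : Γ)) = 1 := by
        rw [hfdef]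
        exact Set.indicator_of_mem hmem _
      have hkey : e x (t + (l : Γ)) * w t = 1 := by
        rw [hwdef]
        simp only
        rw [← he_addG, add_neg_cancel, he0]
      have hnorm : ‖f (t + (l : Γ)) - p (t + (l : Γ))‖ = ‖w t - q t‖ := by
        rw [hfv, hpdef]
        simp only
        rw [hq_per t l]
        have : (1 : ℂ) - e x (t + (l : Γ)) * q t = e x (t + (l : Γ)) * (w t - q t) := by
          rw [mul_sub, hkey]
        rw [this, norm_mul, he_norm, one_mul]
      rw [hΦdef]
      simp only
      congr 2
      exact NNReal.coe_injective (by simpa [coe_nnnorm] using hnorm)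
    have hΦκ : ∀ t ∈ T, ∀ κ : Λ, f (t + (κ : Γ)) = 0 → Φ (t + (κ : Γ)) = Ψ t := by
      intro t ht κ hfv
      rw [hΦdef, hΨdef]
      simp only
      congr 2
      apply NNReal.coe_injective
      simp only [coe_nnnorm]
      rw [hfv, zero_sub, norm_neg, hpdef]
      simp only
      rw [hq_per t κ, norm_mul, he_norm, one_mul]
    have hfval0 : ∀ t ∈ T, ∀ κ : Λ, ¬(κ = l ∧ t ∈ B) → f (t + (κ : Γ)) = 0 := by
      intro t ht κ hcond
      rw [hfdef]
      apply Set.indicator_of_notMem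
      intro hmem
      exact hcond (htKB t ht κ hmem)
    have hΨ2 : ∀ t, Ψ t ≤ (2 : ℝ≥0∞) ^ ar := by
      intro t
      apply ENNReal.rpow_le_rpow _ har.le
      have : (‖q t‖₊ : ℝ≥0∞) ≤ ENNReal.ofReal 2 := by
        rw [← ENNReal.ofReal_coe_nnreal, coe_nnnorm]
        exact ENNReal.ofReal_le_ofReal (hq2 t)
      simpa [ENNReal.ofReal_ofNat] using this
    -- the master pointwise bound
    have hbound : ∀ (κ : Λ) (t : Γ), h κ t * Φ (t + (κ : Γ)) ≤
        (if κ = l then B.indicator (fun u => (‖w u - q u‖₊ : ℝ≥0∞) ^ ar) t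
          else B.indicator (fun u => (2 : ℝ≥0∞) ^ ar * h κ u) t)
          + h κ t * (T \ B).indicator Ψ t := by
      intro κ t
      by_cases htT : t ∈ T
      · by_cases htB : t ∈ B
        · have hTB0 : (T \ B).indicator Ψ t = 0 :=
            Set.indicator_of_notMem (fun hc => hc.2 htB) _
          by_cases hκl : κ = l
          · subst hκl
            rw [h1 t htB, one_mul, hΦl t htB, if_pos rfl,
              Set.indicator_of_mem htB, hTB0, mul_zero, add_zero]
          · have hfv : f (t + (κ : Γ)) = 0 :=
              hfval0 t htT κ (fun hc => hκl hc.1)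
            rw [hΦκ t htT κ hfv, if_neg hκl, Set.indicator_of_mem htB,
              hTB0, mul_zero, add_zero, mul_comm]
            exact mul_le_mul_left (hΨ2 t) _
        · have hfv : f (t + (κ : Γ)) = 0 :=
            hfval0 t htT κ (fun hc => htB hc.2)
          have hmemTB : t ∈ T \ B := ⟨htT, htB⟩
          rw [hΦκ t htT κ hfv, Set.indicator_of_mem hmemTB]
          exact le_add_left (le_refl _)
      · rw [hh0 κ t htT, zero_mul]
        exact zero_le
    -- integrate the master bound
    have hI1 : ∫⁻ γ, Φ γ ∂μ ≤ ∑' κ : Λ, ∫⁻ γ in (κ : Γ) +ᵥ T, Φ γ ∂μ := by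
      rw [← setLIntegral_univ, ← hcover]
      exact lintegral_iUnion_le _ _
    have hJ : ∀ κ : Λ, ∫⁻ γ in (κ : Γ) +ᵥ T, Φ γ ∂μ
        = ∫⁻ t, h κ t * Φ (t + (κ : Γ)) ∂ν := by
      intro κ
      have hmcomp : Measurable fun t => Φ (t + (κ : Γ)) :=
        hΦmeas.comp (measurable_add_const _)
      have step1 : ∫⁻ t, Φ (t + (κ : Γ))
            ∂(Measure.map (fun γ => γ - (κ : Γ)) (μ.restrict ((κ : Γ) +ᵥ T)))
          = ∫⁻ γ in (κ : Γ) +ᵥ T, Φ γ ∂μ := by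
        rw [lintegral_map hmcomp (hmsub κ)]
        congr 1
        funext γ
        rw [sub_add_cancel]
      rw [← step1, hh κ, lintegral_withDensity_eq_lintegral_mul ν (hmeas κ) hmcomp]
      rfl
    have hI2 : ∫⁻ γ, Φ γ ∂μ ≤
        (∫⁻ t in B, (‖w t - q t‖₊ : ℝ≥0∞) ^ ar ∂ν) + ∫⁻ t in T \ B, Ψ t ∂ν := by
      have hwq_meas : Measurable fun u => (‖w u - q u‖₊ : ℝ≥0∞) ^ ar :=
        (((hw_cont.sub hq_cont).measurable).nnnorm.coe_nnreal_ennreal).pow_const ar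
      have hind_meas : Measurable ((T \ B).indicator Ψ) :=
        hΨmeas.indicator hTBmeas
      calc ∫⁻ γ, Φ γ ∂μ ≤ ∑' κ : Λ, ∫⁻ γ in (κ : Γ) +ᵥ T, Φ γ ∂μ := hI1
        _ = ∑' κ : Λ, ∫⁻ t, h κ t * Φ (t + (κ : Γ)) ∂ν := tsum_congr hJ
        _ ≤ ∑' κ : Λ, ((∫⁻ t, (if κ = l then B.indicator
              (fun u => (‖w u - q u‖₊ : ℝ≥0∞) ^ ar) t
              else B.indicator (fun u => (2 : ℝ≥0∞) ^ ar * h κ u) t) ∂ν)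
            + ∫⁻ t, h κ t * (T \ B).indicator Ψ t ∂ν) := by
            apply ENNReal.tsum_le_tsum
            intro κ
            calc ∫⁻ t, h κ t * Φ (t + (κ : Γ)) ∂ν
                ≤ ∫⁻ t, ((if κ = l then B.indicator
                    (fun u => (‖w u - q u‖₊ : ℝ≥0∞) ^ ar) t
                    else B.indicator (fun u => (2 : ℝ≥0∞) ^ ar * h κ u) t)
                  + h κ t * (T \ B).indicator Ψ t) ∂ν :=
                  lintegral_mono (hbound κ)
              _ = _ := by
                  apply lintegral_add_right'
                  exact ((hmeas κ).mul hind_meas).aemeasurable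
        _ = (∑' κ : Λ, ∫⁻ t, (if κ = l then B.indicator
              (fun u => (‖w u - q u‖₊ : ℝ≥0∞) ^ ar) t
              else B.indicator (fun u => (2 : ℝ≥0∞) ^ ar * h κ u) t) ∂ν)
            + ∑' κ : Λ, ∫⁻ t, h κ t * (T \ B).indicator Ψ t ∂ν := ENNReal.tsum_add
        _ ≤ (∫⁻ t in B, (‖w t - q t‖₊ : ℝ≥0∞) ^ ar ∂ν) + ∫⁻ t in T \ B, Ψ t ∂ν := by
            apply add_le_add
            · -- first sum
              rw [ENNReal.summable.tsum_eq_add_tsum_ite' l]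
              have hmain : ∫⁻ t, (if l = l then B.indicator
                  (fun u => (‖w u - q u‖₊ : ℝ≥0∞) ^ ar) t
                  else B.indicator (fun u => (2 : ℝ≥0∞) ^ ar * h l u) t) ∂ν
                  = ∫⁻ t in B, (‖w t - q t‖₊ : ℝ≥0∞) ^ ar ∂ν := by
                simp only [eq_self_iff_true, if_true]
                rw [lintegral_indicator hB]
              rw [hmain]
              have hrest : ∑' κ : Λ, (if κ = l then 0 else
                  ∫⁻ t, (if κ = l then B.indicator
                    (fun u => (‖w u - q u‖₊ : ℝ≥0∞) ^ ar) t
                    else B.indicator (fun u => (2 : ℝ≥0∞) ^ ar * h κ u) t) ∂ν) = 0 := by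
                have hcongr : ∀ κ : Λ, (if κ = l then 0 else
                    ∫⁻ t, (if κ = l then B.indicator
                      (fun u => (‖w u - q u‖₊ : ℝ≥0∞) ^ ar) t
                      else B.indicator (fun u => (2 : ℝ≥0∞) ^ ar * h κ u) t) ∂ν)
                    = (2 : ℝ≥0∞) ^ ar * (if κ = l then 0 else ν.withDensity (h κ) B) := by
                  intro κ
                  by_cases hκl : κ = l
                  · simp [hκl]
                  · simp only [if_neg hκl]
                    rw [lintegral_indicator hB,
                      lintegral_const_mul _ (hmeas κ), ← withDensity_apply _ hB]
                rw [tsum_congr hcongr, ENNReal.tsum_mul_left, hrest0, mul_zero]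
              rw [hrest, add_zero]
            · -- second sum
              rw [hsumh _ hind_meas, lintegral_indicator hTBmeas]
      -- done
    -- ### region estimates
    have hregB : ∫⁻ t in B, (‖w t - q t‖₊ : ℝ≥0∞) ^ ar ∂ν
        ≤ Q + (3 : ℝ≥0∞) ^ ar * ν (B \ K₁) := by
      have hsplit : B = K₁ ∪ (B \ K₁) := (Set.union_diff_cancel hK₁B).symm
      calc ∫⁻ t in B, (‖w t - q t‖₊ : ℝ≥0∞) ^ ar ∂ν
          ≤ (∫⁻ t in K₁, (‖w t - q t‖₊ : ℝ≥0∞) ^ ar ∂ν)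
            + ∫⁻ t in B \ K₁, (‖w t - q t‖₊ : ℝ≥0∞) ^ ar ∂ν := by
            conv_lhs => rw [hsplit]
            exact lintegral_union_le _ _ _
        _ ≤ (ENNReal.ofReal (s + s)) ^ ar * ν K₁ + (3 : ℝ≥0∞) ^ ar * ν (B \ K₁) := by
            apply add_le_add
            · rw [← setLIntegral_const K₁ _]
              apply setLIntegral_mono measurable_const
              intro t ht
              apply ENNReal.rpow_le_rpow _ har.le
              rw [← ENNReal.ofReal_coe_nnreal, coe_nnnorm]
              apply ENNReal.ofReal_le_ofReal
              have hγK : t ∈ K := Or.inl ht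
              have := hqK t hγK
              rw [if_pos (hK₁B ht)] at this
              exact this
            · rw [← setLIntegral_const (B \ K₁) _]
              apply setLIntegral_mono measurable_const
              intro t _
              apply ENNReal.rpow_le_rpow _ har.le
              rw [← ENNReal.ofReal_coe_nnreal, coe_nnnorm]
              have h3 : ‖w t - q t‖ ≤ 3 := by
                have := norm_sub_le (w t) (q t)
                have h1' := hw_norm t
                have h2' := hq2 t
                linarith
              calc ENNReal.ofReal ‖w t - q t‖ ≤ ENNReal.ofReal 3 :=
                    ENNReal.ofReal_le_ofReal h3
                _ = 3 := by norm_num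
        _ ≤ Q + (3 : ℝ≥0∞) ^ ar * ν (B \ K₁) := by
            apply add_le_add_left
            calc (ENNReal.ofReal (s + s)) ^ ar * ν K₁ ≤ z ^ ar * C := by
                  apply mul_le_mul'
                  · exact ENNReal.rpow_le_rpow hssz har.le
                  · rw [hCdef]
                    exact le_trans (measure_mono (subset_univ _)) (le_add_right (le_refl _))
              _ ≤ ρ * C := mul_le_mul_left hzpow _
              _ = Q := by
                  rw [hρdef]
                  exact ENNReal.div_mul_cancel hC0 hCtop
    have hregTB : ∫⁻ t in T \ B, Ψ t ∂ν
        ≤ Q + (2 : ℝ≥0∞) ^ ar * ν ((T \ B) \ K₂) := by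
      have hsplit : T \ B = K₂ ∪ ((T \ B) \ K₂) := (Set.union_diff_cancel hK₂TB).symm
      calc ∫⁻ t in T \ B, Ψ t ∂ν
          ≤ (∫⁻ t in K₂, Ψ t ∂ν) + ∫⁻ t in (T \ B) \ K₂, Ψ t ∂ν := by
            conv_lhs => rw [hsplit]
            exact lintegral_union_le _ _ _
        _ ≤ (ENNReal.ofReal (s + s)) ^ ar * ν K₂ + (2 : ℝ≥0∞) ^ ar * ν ((T \ B) \ K₂) := by
            apply add_le_add
            · rw [← setLIntegral_const K₂ _]
              apply setLIntegral_mono measurable_const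
              intro t ht
              apply ENNReal.rpow_le_rpow _ har.le
              rw [← ENNReal.ofReal_coe_nnreal, coe_nnnorm]
              apply ENNReal.ofReal_le_ofReal
              have hγK : t ∈ K := Or.inr ht
              have := hqK t hγK
              rw [if_neg (hK₂TB ht).2, zero_sub, norm_neg] at this
              exact this
            · rw [← setLIntegral_const ((T \ B) \ K₂) _]
              apply setLIntegral_mono measurable_const
              intro t _
              exact hΨ2 t
        _ ≤ Q + (2 : ℝ≥0∞) ^ ar * ν ((T \ B) \ K₂) := by
            apply add_le_add_left
            calc (ENNReal.ofReal (s + s)) ^ ar * ν K₂ ≤ z ^ ar * C := by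
                  apply mul_le_mul'
                  · exact ENNReal.rpow_le_rpow hssz har.le
                  · rw [hCdef]
                    exact le_trans (measure_mono (subset_univ _)) (le_add_right (le_refl _))
              _ ≤ ρ * C := mul_le_mul_left hzpow _
              _ = Q := by
                  rw [hρdef]
                  exact ENNReal.div_mul_cancel hC0 hCtop
    -- ### conclusion
    have hIfinal : ∫⁻ γ, Φ γ ∂μ < Tgt := by
      have hterm3 : (3 : ℝ≥0∞) ^ ar * ν (B \ K₁) ≤ Q :=
        le_trans (mul_le_mul_right hνBK₁.le _) h3δm
      have hterm2 : (2 : ℝ≥0∞) ^ ar * ν ((T \ B) \ K₂) < Q := by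
        apply lt_of_lt_of_le _ h2δm
        rw [ENNReal.mul_lt_mul_iff_right (a := (2 : ℝ≥0∞) ^ ar) _ _]
        · exact hνK₂
        · exact (ENNReal.rpow_pos (by norm_num) (by norm_num)).ne'
        · exact ENNReal.rpow_ne_top_of_nonneg har.le (by norm_num)
      calc ∫⁻ γ, Φ γ ∂μ
          ≤ (∫⁻ t in B, (‖w t - q t‖₊ : ℝ≥0∞) ^ ar ∂ν) + ∫⁻ t in T \ B, Ψ t ∂ν := hI2
        _ ≤ (Q + (3 : ℝ≥0∞) ^ ar * ν (B \ K₁))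
            + (Q + (2 : ℝ≥0∞) ^ ar * ν ((T \ B) \ K₂)) := add_le_add hregB hregTB
        _ ≤ (Q + Q) + (Q + (2 : ℝ≥0∞) ^ ar * ν ((T \ B) \ K₂)) := by
            apply add_le_add_left
            exact add_le_add_right hterm3 _
        _ < (Q + Q) + (Q + Q) := by
            apply ENNReal.add_lt_add_left
            · exact ENNReal.add_ne_top.mpr ⟨hQtop, hQtop⟩
            · exact ENNReal.add_lt_add_left hQtop hterm2
        _ = 4 * Q := by ring
        _ = Tgt := by
            rw [hQdef]
            exact ENNReal.mul_div_cancel (by norm_num) (by norm_num)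
    refine ⟨p, hpT, ?_⟩
    rw [eLpNorm_eq_lintegral_rpow_enorm_toReal hα0.ne' hαtop]
    have hint_eq : (∫⁻ γ, (‖(f - p) γ‖₊ : ℝ≥0∞) ^ α.toReal ∂μ) = ∫⁻ γ, Φ γ ∂μ := by
      congr 1
    calc (∫⁻ γ, (‖(f - p) γ‖₊ : ℝ≥0∞) ^ α.toReal ∂μ) ^ (1 / α.toReal)
        = (∫⁻ γ, Φ γ ∂μ) ^ (1 / ar) := by rw [hint_eq]
      _ < Tgt ^ (1 / ar) := ENNReal.rpow_lt_rpow hIfinal (by positivity)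
      _ = ε₀ := by
          rw [hTgtdef, ← ENNReal.rpow_mul, mul_one_div_cancel har.ne', ENNReal.rpow_one]
      _ ≤ ε := min_le_left _ _
  exact ⟨conj1, conj2, fun hall => conj2 (hall _ conj1)⟩
end

section
/- The notion of H-regularity of a finite regular Borel measure μ on Γ does not depend on the exponent α ∈ (0,∞): if the intersection ∩_{x̃ ∈ G/H} C_α P(x̃) equals {0} in L^α(μ) for one α ∈ (0,∞), then it equals {0} for every α ∈ (0,∞). -/
open MeasureTheory Set Pointwise
open scoped ENNReal

namespace Stmt7Aux

/-! ### The power map `psi θ` -/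

noncomputable def psi (θ : ℝ) (w : ℂ) : ℂ := (‖w‖ ^ (θ - 1) : ℝ) • w

private lemma rpow_sub_one_mul {x : ℝ} (hx : 0 < x) (θ : ℝ) : x ^ (θ - 1) * x = x ^ θ := by
  rw [← Real.rpow_add_one hx.ne' (θ - 1), sub_add_cancel]

lemma psi_norm {θ : ℝ} (hθ : 0 < θ) (w : ℂ) : ‖psi θ w‖ = ‖w‖ ^ θ := by
  rcases eq_or_ne w 0 with rfl | hw
  · simp [psi, Real.zero_rpow hθ.ne']
  · have hw' : (0:ℝ) < ‖w‖ := norm_pos_iff.2 hw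
    rw [psi, norm_smul, Real.norm_eq_abs, abs_of_nonneg (Real.rpow_nonneg hw'.le _)]
    exact rpow_sub_one_mul hw' θ

private lemma rpow_anti {x y z : ℝ} (hx : 0 < x) (hxy : x ≤ y) (hz : z ≤ 0) :
    y ^ z ≤ x ^ z :=
  Real.rpow_le_rpow_of_nonpos hx hxy hz

/-- Global `θ`-Hölder estimate for `psi θ`. -/
lemma psi_holder {θ : ℝ} (hθ0 : 0 < θ) (hθ1 : θ ≤ 1) (w v : ℂ) :
    ‖psi θ w - psi θ v‖ ≤ 3 * ‖w - v‖ ^ θ := by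
  -- WLOG ‖v‖ ≤ ‖w‖
  wlog hwv : ‖v‖ ≤ ‖w‖ generalizing w v
  · calc ‖psi θ w - psi θ v‖ = ‖psi θ v - psi θ w‖ := norm_sub_rev _ _
      _ ≤ 3 * ‖v - w‖ ^ θ := this v w (le_of_not_ge hwv)
      _ = 3 * ‖w - v‖ ^ θ := by rw [norm_sub_rev]
  set t := ‖w‖ with ht
  set r := ‖v‖ with hr
  set d := ‖w - v‖ with hd
  have hd0 : 0 ≤ d := norm_nonneg _
  have hr0 : 0 ≤ r := norm_nonneg _
  have htrd : t ≤ r + d := by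
    calc t = ‖v + (w - v)‖ := by rw [add_sub_cancel]
      _ ≤ r + d := norm_add_le _ _
  have hdθ0 : 0 ≤ d ^ θ := Real.rpow_nonneg hd0 _
  rcases le_or_gt r d with hcase | hcase
  · -- small case : r ≤ d
    have h1 : ‖psi θ w - psi θ v‖ ≤ t ^ θ + r ^ θ := by
      calc ‖psi θ w - psi θ v‖ ≤ ‖psi θ w‖ + ‖psi θ v‖ := norm_sub_le _ _
        _ = t ^ θ + r ^ θ := by rw [psi_norm hθ0, psi_norm hθ0]
    have ht2d : t ≤ 2 * d := by linarith
    have h2 : t ^ θ ≤ 2 * d ^ θ := by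
      calc t ^ θ ≤ (2 * d) ^ θ := Real.rpow_le_rpow (norm_nonneg _) ht2d hθ0.le
        _ = 2 ^ θ * d ^ θ := Real.mul_rpow (by norm_num) hd0
        _ ≤ 2 * d ^ θ := by
            have : (2:ℝ) ^ θ ≤ 2 ^ (1:ℝ) :=
              Real.rpow_le_rpow_of_exponent_le one_le_two hθ1
            rw [Real.rpow_one] at this
            exact mul_le_mul_of_nonneg_right this hdθ0
    have h3 : r ^ θ ≤ d ^ θ := Real.rpow_le_rpow hr0 hcase hθ0.le
    linarith
  · -- large case : d < r ≤ t
    rcases eq_or_lt_of_le hd0 with hdz | hdpos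
    · -- d = 0, so w = v
      have hw_eq : w = v := by
        have h0 : ‖w - v‖ = 0 := by rw [← hd, ← hdz]
        exact sub_eq_zero.1 (norm_eq_zero.1 h0)
      rw [hw_eq]
      simp only [sub_self, norm_zero]
      positivity
    have hrpos : 0 < r := hdpos.trans hcase
    have htpos : 0 < t := lt_of_lt_of_le hrpos hwv
    have key : psi θ w - psi θ v
        = (t ^ (θ - 1)) • (w - v) + ((t ^ (θ - 1)) - (r ^ (θ - 1))) • v := by
      simp only [psi, smul_sub, sub_smul]
      abel
    have hb1 : ‖(t ^ (θ - 1)) • (w - v)‖ ≤ d ^ θ := by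
      rw [norm_smul, Real.norm_eq_abs, abs_of_nonneg (Real.rpow_nonneg htpos.le _)]
      have h1 : t ^ (θ - 1) ≤ d ^ (θ - 1) :=
        rpow_anti hdpos (hcase.le.trans hwv) (by linarith)
      calc t ^ (θ - 1) * d ≤ d ^ (θ - 1) * d :=
            mul_le_mul_of_nonneg_right h1 hd0
        _ = d ^ θ := rpow_sub_one_mul hdpos θ
    have hb2 : ‖((t ^ (θ - 1)) - (r ^ (θ - 1))) • v‖ ≤ d ^ θ := by
      rw [norm_smul, Real.norm_eq_abs]
      have hmono : t ^ (θ - 1) ≤ r ^ (θ - 1) :=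
        rpow_anti hrpos hwv (by linarith)
      rw [abs_of_nonpos (by linarith), neg_sub]
      -- goal : (r^(θ-1) - t^(θ-1)) * r ≤ d ^ θ
      have h1 : (r + d) ^ (θ - 1) ≤ t ^ (θ - 1) := rpow_anti htpos htrd (by linarith)
      have hrd : 0 < r + d := by linarith
      have h2 : (r + d) ^ θ = r * (r + d) ^ (θ - 1) + d * (r + d) ^ (θ - 1) := by
        rw [← rpow_sub_one_mul hrd θ]; ring
      have h3 : d * (r + d) ^ (θ - 1) ≤ d ^ θ := by
        have : (r + d) ^ (θ - 1) ≤ d ^ (θ - 1) :=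
          rpow_anti hdpos (by linarith) (by linarith)
        calc d * (r + d) ^ (θ - 1) ≤ d * d ^ (θ - 1) :=
              mul_le_mul_of_nonneg_left this hd0
          _ = d ^ θ := by rw [mul_comm]; exact rpow_sub_one_mul hdpos θ
      have h4 : r ^ θ ≤ (r + d) ^ θ :=
        Real.rpow_le_rpow hr0 (by linarith) hθ0.le
      have h5 : r ^ (θ - 1) * r = r ^ θ := rpow_sub_one_mul hrpos θ
      have h6 : r * (r + d) ^ (θ - 1) ≤ r * t ^ (θ - 1) :=
        mul_le_mul_of_nonneg_left h1 hr0
      nlinarith [Real.rpow_nonneg htpos.le (θ - 1), mul_le_mul_of_nonneg_right h1 hr0]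
    calc ‖psi θ w - psi θ v‖
        ≤ ‖(t ^ (θ - 1)) • (w - v)‖ + ‖((t ^ (θ - 1)) - (r ^ (θ - 1))) • v‖ := by
          rw [key]; exact norm_add_le _ _
      _ ≤ d ^ θ + d ^ θ := add_le_add hb1 hb2
      _ ≤ 3 * d ^ θ := by linarith

lemma psi_continuous {θ : ℝ} (hθ0 : 0 < θ) (hθ1 : θ ≤ 1) : Continuous (psi θ) := by
  rw [Metric.continuous_iff]
  intro w ε hε
  refine ⟨(ε / 4) ^ (1 / θ), Real.rpow_pos_of_pos (by linarith) _, fun v hv => ?_⟩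
  rw [dist_eq_norm] at hv ⊢
  have h1 : ‖psi θ v - psi θ w‖ ≤ 3 * ‖v - w‖ ^ θ := psi_holder hθ0 hθ1 v w
  have h2 : ‖v - w‖ ^ θ < ((ε / 4) ^ (1 / θ)) ^ θ :=
    Real.rpow_lt_rpow (norm_nonneg _) hv hθ0
  rw [← Real.rpow_mul (by positivity), one_div_mul_cancel hθ0.ne', Real.rpow_one] at h2
  calc ‖psi θ v - psi θ w‖ ≤ 3 * ‖v - w‖ ^ θ := h1
    _ < 3 * (ε / 4) := by
        exact mul_lt_mul_of_pos_left h2 (by norm_num)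
    _ < ε := by linarith

/-- Approximation of `psi θ` by the regularized power function. -/
lemma psi_approx {θ δ : ℝ} (hθ0 : 0 < θ) (hθ1 : θ ≤ 1) (hδ : 0 < δ) (w : ℂ) :
    ‖psi θ w - ((δ + ‖w‖ ^ 2) ^ ((θ - 1) / 2) : ℝ) • w‖ ≤ δ ^ (θ / 2) := by
  rcases eq_or_ne w 0 with rfl | hw
  · simp [psi]
    positivity
  have ht : (0:ℝ) < ‖w‖ := norm_pos_iff.2 hw
  set t := ‖w‖ with htdef
  set s := δ ^ ((2:ℝ)⁻¹) with hsdef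
  have hs : 0 < s := Real.rpow_pos_of_pos hδ _
  have hss : s * s = δ := by
    rw [hsdef, ← Real.rpow_add hδ]
    norm_num
  set c := (δ + t ^ 2) ^ ((θ - 1) / 2) with hcdef
  have hδt : (0:ℝ) < δ + t ^ 2 := by positivity
  -- c ≤ t ^ (θ - 1)
  have hc_le : c ≤ t ^ (θ - 1) := by
    have h1 : (t ^ 2 : ℝ) ≤ δ + t ^ 2 := by linarith
    have h2 : (δ + t ^ 2) ^ ((θ - 1) / 2) ≤ (t ^ 2 : ℝ) ^ ((θ - 1) / 2) :=
      rpow_anti (by positivity) h1 (by linarith)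
    have h3 : ((t:ℝ) ^ 2) ^ ((θ - 1) / 2) = t ^ (θ - 1) := by
      rw [← Real.rpow_natCast t 2, ← Real.rpow_mul ht.le]
      congr 1
      ring
    rw [hcdef, ← h3]; exact h2
  -- c ≥ (t + s) ^ (θ - 1)
  have hc_ge : (t + s) ^ (θ - 1) ≤ c := by
    have h1 : δ + t ^ 2 ≤ (t + s) ^ 2 := by nlinarith
    have h2 : ((t + s) ^ 2 : ℝ) ^ ((θ - 1) / 2) ≤ (δ + t ^ 2) ^ ((θ - 1) / 2) :=
      rpow_anti hδt h1 (by linarith)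
    have h3 : ((t + s) ^ 2 : ℝ) ^ ((θ - 1) / 2) = (t + s) ^ (θ - 1) := by
      rw [← Real.rpow_natCast (t + s) 2, ← Real.rpow_mul (by positivity : (0:ℝ) ≤ t + s)]
      congr 1
      ring
    rw [hcdef, ← h3]; exact h2
  -- the difference
  have hdiff : psi θ w - c • w = (t ^ (θ - 1) - c) • w := by
    rw [psi, sub_smul]
  rw [hdiff, norm_smul, Real.norm_eq_abs, abs_of_nonneg (by linarith)]
  -- (t^(θ-1) - c) * t ≤ s ^ θ
  have hts : 0 < t + s := by linarith
  have key1 : t ^ (θ - 1) * t = t ^ θ := rpow_sub_one_mul ht θ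
  have key2 : (t + s) ^ θ = (t + s) ^ (θ - 1) * (t + s) :=
    (rpow_sub_one_mul hts θ).symm
  have key3 : (t + s) ^ (θ - 1) ≤ s ^ (θ - 1) := rpow_anti hs (by linarith) (by linarith)
  have key4 : s ^ (θ - 1) * s = s ^ θ := rpow_sub_one_mul hs θ
  have key5 : t ^ θ ≤ (t + s) ^ θ := Real.rpow_le_rpow ht.le (by linarith) hθ0.le
  have key6 : s ^ θ = δ ^ (θ / 2) := by
    rw [hsdef, ← Real.rpow_mul hδ.le]
    congr 1
    ring
  -- t * c ≥ (t+s)^θ - s^θ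
  have key7 : (t + s) ^ θ - s ^ θ ≤ t * c := by
    have h1 : t * (t + s) ^ (θ - 1) ≤ t * c := mul_le_mul_of_nonneg_left hc_ge ht.le
    nlinarith [mul_le_mul_of_nonneg_left key3 hs.le]
  nlinarith

end Stmt7Aux

section TrigPolyAux

variable {G Γ : Type*} [AddCommGroup G] (e : G → Γ → ℂ) (H : AddSubgroup G)

lemma e_zero_eq_one (he_norm : ∀ x γ, ‖e x γ‖ = 1)
    (he_addG : ∀ x y γ, e (x + y) γ = e x γ * e y γ) (γ : Γ) : e 0 γ = 1 := by
  have h := he_addG 0 0 γ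
  rw [add_zero] at h
  have hne : e 0 γ ≠ 0 := by
    intro h0
    have := he_norm 0 γ
    rw [h0] at this
    simp at this
  have : e 0 γ * 1 = e 0 γ * e 0 γ := by rw [mul_one, ← h]
  exact (mul_left_cancel₀ hne this).symm

lemma e_conj (he_norm : ∀ x γ, ‖e x γ‖ = 1)
    (he_addG : ∀ x y γ, e (x + y) γ = e x γ * e y γ) (z : G) (γ : Γ) :
    (starRingEnd ℂ) (e z γ) = e (-z) γ := by
  have hne : e z γ ≠ 0 := by
    intro h0
    have := he_norm z γ
    rw [h0] at this
    simp at this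
  have h1 : e z γ * e (-z) γ = 1 := by
    rw [← he_addG, add_neg_cancel, e_zero_eq_one e he_norm he_addG]
  have h2 : e z γ * (starRingEnd ℂ) (e z γ) = 1 := by
    rw [Complex.mul_conj]
    have : Complex.normSq (e z γ) = 1 := by
      rw [Complex.normSq_eq_norm_sq, he_norm]
      norm_num
    rw [this]
    norm_num
  exact mul_left_cancel₀ hne (h2.trans h1.symm)

lemma trigPoly_mul (he_addG : ∀ x y γ, e (x + y) γ = e x γ * e y γ)
    {x z : G} {u v : Γ → ℂ} (hu : u ∈ trigPoly e H x) (hv : v ∈ trigPoly e H z) :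
    u * v ∈ trigPoly e H (x + z) := by
  have hmem : u * v ∈ Submodule.span ℂ {f : Γ → ℂ | ∃ y ∈ H, f = e (x + y)} *
      Submodule.span ℂ {f : Γ → ℂ | ∃ y ∈ H, f = e (z + y)} :=
    Submodule.mul_mem_mul hu hv
  rw [Submodule.span_mul_span] at hmem
  have hsub : ({f : Γ → ℂ | ∃ y ∈ H, f = e (x + y)} *
      {f : Γ → ℂ | ∃ y ∈ H, f = e (z + y)} : Set (Γ → ℂ)) ⊆
      {f : Γ → ℂ | ∃ y ∈ H, f = e ((x + z) + y)} := by
    rintro w ⟨a, ⟨y1, hy1, rfl⟩, b, ⟨y2, hy2, rfl⟩, rfl⟩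
    refine ⟨y1 + y2, H.add_mem hy1 hy2, ?_⟩
    funext γ
    rw [show (x + z) + (y1 + y2) = (x + y1) + (z + y2) by abel, he_addG]
    rfl
  exact Submodule.span_le.mpr
    ((Set.Subset.trans hsub Submodule.subset_span : _)) hmem

lemma trigPoly_star (he_norm : ∀ x γ, ‖e x γ‖ = 1)
    (he_addG : ∀ x y γ, e (x + y) γ = e x γ * e y γ)
    {x : G} {u : Γ → ℂ} (hu : u ∈ trigPoly e H x) :
    star u ∈ trigPoly e H (-x) := by
  refine Submodule.span_induction ?_ ?_ ?_ ?_ hu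
  · rintro p ⟨y, hy, rfl⟩
    apply Submodule.subset_span
    refine ⟨-y, H.neg_mem hy, ?_⟩
    funext γ
    rw [Pi.star_apply, show -x + -y = -(x + y) by abel]
    rw [← e_conj e he_norm he_addG]
    rfl
  · rw [star_zero]; exact Submodule.zero_mem _
  · intro p q _ _ hp hq
    rw [star_add]; exact Submodule.add_mem _ hp hq
  · intro c p _ hp
    rw [star_smul]; exact Submodule.smul_mem _ _ hp

lemma trigPoly_continuous [TopologicalSpace Γ] (he_cont : ∀ x, Continuous (e x))
    {x : G} {p : Γ → ℂ} (hp : p ∈ trigPoly e H x) :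
    Continuous p := by
  refine Submodule.span_induction ?_ ?_ ?_ ?_ hp
  · rintro q ⟨y, hy, rfl⟩
    exact he_cont _
  · exact continuous_zero
  · intro q r _ _ hq hr
    exact hq.add hr
  · intro c q _ hq
    exact hq.const_smul c

lemma trigPoly_bdd (he_norm : ∀ x γ, ‖e x γ‖ = 1)
    {x : G} {p : Γ → ℂ} (hp : p ∈ trigPoly e H x) :
    ∃ B : ℝ, 0 ≤ B ∧ ∀ γ, ‖p γ‖ ≤ B := by
  refine Submodule.span_induction ?_ ?_ ?_ ?_ hp
  · rintro q ⟨y, hy, rfl⟩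
    exact ⟨1, zero_le_one, fun γ => le_of_eq (he_norm _ γ)⟩
  · exact ⟨0, le_refl _, fun γ => by simp⟩
  · rintro q r _ _ ⟨B1, hB1, h1⟩ ⟨B2, hB2, h2⟩
    exact ⟨B1 + B2, add_nonneg hB1 hB2, fun γ =>
      (norm_add_le _ _).trans (add_le_add (h1 γ) (h2 γ))⟩
  · rintro c q _ ⟨B, hB, h⟩
    refine ⟨‖c‖ * B, mul_nonneg (norm_nonneg _) hB, fun γ => ?_⟩
    rw [Pi.smul_apply, norm_smul]
    exact mul_le_mul_of_nonneg_left (h γ) (norm_nonneg _)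

lemma trigPoly_one (he_norm : ∀ x γ, ‖e x γ‖ = 1)
    (he_addG : ∀ x y γ, e (x + y) γ = e x γ * e y γ) :
    (1 : Γ → ℂ) ∈ trigPoly e H 0 := by
  apply Submodule.subset_span
  refine ⟨0, H.zero_mem, ?_⟩
  funext γ
  rw [add_zero, e_zero_eq_one e he_norm he_addG]
  rfl

lemma trigPoly_pow (he_norm : ∀ x γ, ‖e x γ‖ = 1)
    (he_addG : ∀ x y γ, e (x + y) γ = e x γ * e y γ)
    {p : Γ → ℂ} (hp : p ∈ trigPoly e H 0) (n : ℕ) :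
    p ^ n ∈ trigPoly e H 0 := by
  induction n with
  | zero => rw [pow_zero]; exact trigPoly_one e H he_norm he_addG
  | succ n ih =>
      rw [pow_succ]
      have := trigPoly_mul e H he_addG ih hp
      rwa [add_zero] at this

lemma trigPoly_polyeval (he_norm : ∀ x γ, ‖e x γ‖ = 1)
    (he_addG : ∀ x y γ, e (x + y) γ = e x γ * e y γ)
    {p : Γ → ℂ} (hp : p ∈ trigPoly e H 0) (Qc : Polynomial ℂ) :
    (fun γ => Qc.eval (p γ)) ∈ trigPoly e H 0 := by
  have heq : (fun γ => Qc.eval (p γ))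
      = ∑ i ∈ Finset.range (Qc.natDegree + 1), Qc.coeff i • p ^ i := by
    funext γ
    rw [Polynomial.eval_eq_sum_range]
    simp [Finset.sum_apply, Pi.smul_apply, Pi.pow_apply, smul_eq_mul]
  rw [heq]
  exact Submodule.sum_mem _ fun i _ =>
    Submodule.smul_mem _ _ (trigPoly_pow e H he_norm he_addG hp i)

end TrigPolyAux

section WeierstrassAux

/-- Weierstrass approximation, in usable form. -/
lemma exists_poly_near (a b : ℝ) (f : ℝ → ℝ) (hf : Continuous f) {η : ℝ} (hη : 0 < η) :
    ∃ Q : Polynomial ℝ, ∀ t ∈ Set.Icc a b, |f t - Q.eval t| ≤ η := by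
  set fc : C(Set.Icc a b, ℝ) := ⟨fun t => f t, hf.comp continuous_subtype_val⟩ with hfc
  have hmem : fc ∈ (polynomialFunctions (Set.Icc a b)).topologicalClosure := by
    rw [polynomialFunctions_closure_eq_top]
    trivial
  have hcl : fc ∈ closure (polynomialFunctions (Set.Icc a b) : Set C(Set.Icc a b, ℝ)) := hmem
  rcases Metric.mem_closure_iff.1 hcl η hη with ⟨g, hg, hdist⟩
  rw [polynomialFunctions_coe] at hg
  rcases hg with ⟨Q, rfl⟩
  refine ⟨Q, fun t ht => ?_⟩
  have h1 : dist (fc ⟨t, ht⟩) ((Polynomial.toContinuousMapOnAlgHom (Set.Icc a b) Q) ⟨t, ht⟩)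
      ≤ dist fc (Polynomial.toContinuousMapOnAlgHom (Set.Icc a b) Q) :=
    ContinuousMap.dist_apply_le_dist _
  have h2 : dist (fc ⟨t, ht⟩) ((Polynomial.toContinuousMapOnAlgHom (Set.Icc a b) Q) ⟨t, ht⟩)
      = |f t - Q.eval t| := by
    rw [Real.dist_eq]
    congr 1
  rw [h2] at h1
  exact h1.trans (le_of_lt hdist)

end WeierstrassAux

section ELpAux

variable {Γ : Type*} [MeasurableSpace Γ] {μ : Measure Γ}

/-- Comparison of `eLpNorm`s through a pointwise power bound. -/
lemma eLpNorm_le_pow_bound {h1 h2 : Γ → ℂ} {α β : ℝ≥0∞}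
    (hα0 : α ≠ 0) (hαtop : α ≠ ∞) (hβ0 : β ≠ 0) (hβtop : β ≠ ∞)
    {θ c : ℝ} (hc : 0 ≤ c) (hθ : 0 < θ) (hab : β.toReal = θ * α.toReal)
    (hpt : ∀ γ, ‖h1 γ‖ ≤ c * ‖h2 γ‖ ^ θ) :
    eLpNorm h1 α μ ≤ ENNReal.ofReal c * eLpNorm h2 β μ ^ θ := by
  have ha0 : 0 < α.toReal := ENNReal.toReal_pos hα0 hαtop
  have hb0 : 0 < β.toReal := ENNReal.toReal_pos hβ0 hβtop
  rw [eLpNorm_eq_lintegral_rpow_enorm_toReal hα0 hαtop, eLpNorm_eq_lintegral_rpow_enorm_toReal hβ0 hβtop]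
  set a := α.toReal with hadef
  set b := β.toReal with hbdef
  have key : ∀ γ, ((‖h1 γ‖₊ : ℝ≥0∞)) ^ a
      ≤ (ENNReal.ofReal c * ((‖h2 γ‖₊ : ℝ≥0∞)) ^ θ) ^ a := by
    intro γ
    refine ENNReal.rpow_le_rpow ?_ ha0.le
    calc (‖h1 γ‖₊ : ℝ≥0∞) = ENNReal.ofReal ‖h1 γ‖ := (ofReal_norm _).symm
      _ ≤ ENNReal.ofReal (c * ‖h2 γ‖ ^ θ) := ENNReal.ofReal_le_ofReal (hpt γ)
      _ = ENNReal.ofReal c * ENNReal.ofReal (‖h2 γ‖ ^ θ) := ENNReal.ofReal_mul hc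
      _ = ENNReal.ofReal c * (ENNReal.ofReal ‖h2 γ‖) ^ θ := by
          rw [ENNReal.ofReal_rpow_of_nonneg (norm_nonneg _) hθ.le]
      _ = ENNReal.ofReal c * ((‖h2 γ‖₊ : ℝ≥0∞)) ^ θ := by
          rw [ofReal_norm, enorm_eq_nnnorm]
  have hcne : (ENNReal.ofReal c) ^ a ≠ ∞ :=
    (ENNReal.rpow_lt_top_of_nonneg ha0.le ENNReal.ofReal_ne_top).ne
  calc (∫⁻ γ, ((‖h1 γ‖₊ : ℝ≥0∞)) ^ a ∂μ) ^ (1 / a)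
      ≤ (∫⁻ γ, (ENNReal.ofReal c * ((‖h2 γ‖₊ : ℝ≥0∞)) ^ θ) ^ a ∂μ) ^ (1 / a) :=
        ENNReal.rpow_le_rpow (lintegral_mono key) (by positivity)
    _ = ((ENNReal.ofReal c) ^ a * ∫⁻ γ, ((‖h2 γ‖₊ : ℝ≥0∞)) ^ b ∂μ) ^ (1 / a) := by
        congr 1
        rw [← lintegral_const_mul' _ _ hcne]
        apply lintegral_congr
        intro γ
        rw [ENNReal.mul_rpow_of_nonneg _ _ ha0.le, ← ENNReal.rpow_mul, ← hab]
    _ = ENNReal.ofReal c * ((∫⁻ γ, ((‖h2 γ‖₊ : ℝ≥0∞)) ^ b ∂μ) ^ (1 / a)) := by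
        rw [ENNReal.mul_rpow_of_nonneg _ _ (by positivity), ← ENNReal.rpow_mul,
          mul_one_div_cancel ha0.ne', ENNReal.rpow_one]
    _ = ENNReal.ofReal c * ((∫⁻ γ, ((‖h2 γ‖₊ : ℝ≥0∞)) ^ b ∂μ) ^ (1 / b)) ^ θ := by
        rw [← ENNReal.rpow_mul]
        congr 2
        rw [hab]
        field_simp

end ELpAux

section MemClAux

variable {G Γ : Type*}
    [AddCommGroup G]
    [AddCommGroup Γ] [TopologicalSpace Γ] [IsTopologicalAddGroup Γ]
    [MeasurableSpace Γ] [BorelSpace Γ]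

/-- Monotonicity of `memCl` in the exponent, for finite measures. -/
lemma memCl_mono (e : G → Γ → ℂ) (H : AddSubgroup G)
    (he_cont : ∀ x, Continuous (e x))
    (μ : Measure Γ) [IsFiniteMeasure μ]
    {α' β' : ℝ≥0∞} (hle : α' ≤ β') (hα0 : α' ≠ 0) (hβ0 : β' ≠ 0) (hβtop : β' ≠ ∞)
    {x : G} {f : Γ → ℂ} (hm : memCl e H β' μ x f) : memCl e H α' μ x f := by
  obtain ⟨hmem, happ⟩ := hm
  have hαtop : α' ≠ ∞ := fun h => hβtop (top_le_iff.1 (h ▸ hle))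
  refine ⟨hmem.mono_exponent hle, ?_⟩
  intro ε hε
  set K := μ Set.univ ^ (1 / α'.toReal - 1 / β'.toReal) with hKdef
  have hexp : 0 ≤ 1 / α'.toReal - 1 / β'.toReal := by
    have ha0 : 0 < α'.toReal := ENNReal.toReal_pos hα0 hαtop
    have hab : α'.toReal ≤ β'.toReal := ENNReal.toReal_mono hβtop hle
    have := one_div_le_one_div_of_le ha0 hab
    linarith
  have hKtop : K ≠ ∞ := (ENNReal.rpow_lt_top_of_nonneg hexp (measure_ne_top μ _)).ne
  have hK1top : K + 1 ≠ ∞ := by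
    simp [hKtop]
  have hK10 : K + 1 ≠ 0 := by
    simp
  obtain ⟨p, hp, hclose⟩ := happ (ε / (K + 1)) (ENNReal.div_pos hε.ne' hK1top)
  refine ⟨p, hp, ?_⟩
  have hfp : AEStronglyMeasurable (f - p) μ :=
    hmem.aestronglyMeasurable.sub (trigPoly_continuous e H he_cont hp).aestronglyMeasurable
  calc eLpNorm (f - p) α' μ ≤ eLpNorm (f - p) β' μ * K :=
        eLpNorm_le_eLpNorm_mul_rpow_measure_univ hle hfp
    _ ≤ eLpNorm (f - p) β' μ * (K + 1) := mul_le_mul_right le_self_add _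
    _ < (ε / (K + 1)) * (K + 1) :=
        ENNReal.mul_lt_mul_left hK10 hK1top hclose
    _ = ε := ENNReal.div_mul_cancel hK10 hK1top

end MemClAux

/-- `H`-regularity does not depend on the exponent: if
`∩_{x̃} C_α P(x̃) = {0}` in `L^α(μ)` for one `α ∈ (0,∞)`, then the same holds for
every `β ∈ (0,∞)`. -/
theorem stmt7 {G Γ : Type*}
    [AddCommGroup G] [TopologicalSpace G] [IsTopologicalAddGroup G] [T2Space G]
    [LocallyCompactSpace G]
    [AddCommGroup Γ] [TopologicalSpace Γ] [IsTopologicalAddGroup Γ] [T2Space Γ]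
    [LocallyCompactSpace Γ] [MeasurableSpace Γ] [BorelSpace Γ]
    (e : G → Γ → ℂ)
    (he_cont : ∀ x, Continuous (e x))
    (he_norm : ∀ x γ, ‖e x γ‖ = 1)
    (he_addG : ∀ x y γ, e (x + y) γ = e x γ * e y γ)
    (he_addΓ : ∀ x γ δ, e x (γ + δ) = e x γ * e x δ)
    (H : AddSubgroup G) (hHc : IsClosed (H : Set G))
    (Λ : AddSubgroup Γ) [Countable Λ]
    (hΛ : ∀ γ : Γ, γ ∈ Λ ↔ ∀ y ∈ H, e y γ = 1)
    (μ : Measure Γ) [IsFiniteMeasure μ] [μ.Regular]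
    (α β : ℝ≥0∞) (hα0 : 0 < α) (hαtop : α ≠ ∞) (hβ0 : 0 < β) (hβtop : β ≠ ∞)
    (hreg : ∀ f : Γ → ℂ, (∀ x : G, memCl e H α μ x f) → f =ᵐ[μ] 0) :
    ∀ f : Γ → ℂ, (∀ x : G, memCl e H β μ x f) → f =ᵐ[μ] 0 := by
  intro f hf
  rcases le_or_gt α β with hle | hlt
  · -- easy case : α ≤ β
    exact hreg f fun x =>
      memCl_mono e H he_cont μ hle hα0.ne' hβ0.ne' hβtop (hf x)
  · -- hard case : β < α
    open Stmt7Aux in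
    set a := α.toReal with hadef
    set b := β.toReal with hbdef
    have ha0 : 0 < a := ENNReal.toReal_pos hα0.ne' hαtop
    have hb0 : 0 < b := ENNReal.toReal_pos hβ0.ne' hβtop
    have hba : b < a := by
      rw [hadef, hbdef]
      exact (ENNReal.toReal_lt_toReal hβtop hαtop).2 hlt
    set θ := b / a with hθdef
    have hθ0 : 0 < θ := div_pos hb0 ha0
    have hθ1 : θ < 1 := (div_lt_one ha0).2 hba
    have hθab : b = θ * a := by
      rw [hθdef]; field_simp
    set g := fun γ => Stmt7Aux.psi θ (f γ) with hgdef
    have hfmem : MemLp f β μ := (hf 0).1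
    -- g is measurable
    have hg_sm : AEStronglyMeasurable g μ := by
      have : Continuous (Stmt7Aux.psi θ) := Stmt7Aux.psi_continuous hθ0 hθ1.le
      exact this.comp_aestronglyMeasurable hfmem.aestronglyMeasurable
    -- pointwise norm identity / bound
    have hg_pt : ∀ γ, ‖g γ‖ ≤ 1 * ‖f γ‖ ^ θ := fun γ => by
      rw [one_mul, hgdef, Stmt7Aux.psi_norm hθ0]
    -- g ∈ L^α
    have hg_mem : MemLp g α μ := by
      refine ⟨hg_sm, ?_⟩
      calc eLpNorm g α μ ≤ ENNReal.ofReal 1 * eLpNorm f β μ ^ θ :=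
            eLpNorm_le_pow_bound hα0.ne' hαtop hβ0.ne' hβtop zero_le_one hθ0 hθab hg_pt
        _ < ∞ := by
            rw [ENNReal.ofReal_one, one_mul]
            exact ENNReal.rpow_lt_top_of_nonneg hθ0.le hfmem.2.ne
    -- the approximation property for g at every x
    have hg_cl : ∀ x : G, memCl e H α μ x g := by
      intro x
      refine ⟨hg_mem, ?_⟩
      intro ε hε
      obtain ⟨-, happ⟩ := hf x
      set L := ENNReal.LpAddConst α with hLdef
      have hLtop : L ≠ ∞ := (ENNReal.LpAddConst_lt_top α).ne
      set m := min 1 ε with hmdef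
      have hm0 : m ≠ 0 := (lt_min zero_lt_one hε).ne'
      have hmtop : m ≠ ∞ :=
        ((min_le_left (1:ℝ≥0∞) ε).trans_lt ENNReal.one_lt_top).ne
      set ε₃ := m / 2 / (L + 1) with hε₃def
      set ε₂ := ε₃ / 2 with hε₂def
      have hε₂0 : ε₂ ≠ 0 := by
        simp only [hε₂def, hε₃def]
        simp [ENNReal.div_eq_zero_iff, hm0, hLtop]
      have hε₂top : ε₂ ≠ ∞ := by
        simp only [hε₂def, hε₃def]
        simp [ENNReal.div_eq_top, hm0, hmtop]
      -- choose the approximating polynomial in L^β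
      set ε₁ := (ε₂ / 4) ^ (1 / θ) with hε₁def
      have hε₁0 : 0 < ε₁ := by
        apply ENNReal.rpow_pos (ENNReal.div_pos hε₂0 (by norm_num)) ?_
        exact (ENNReal.div_lt_top hε₂top (by norm_num)).ne
      obtain ⟨p, hp, hclose⟩ := happ ε₁ hε₁0
      have hp_cont : Continuous p := trigPoly_continuous e H he_cont hp
      obtain ⟨B, hB0, hBp⟩ := trigPoly_bdd e H he_norm hp
      -- choose the uniform error bound c0
      set M := μ Set.univ ^ a⁻¹ with hMdef
      have hMtop : M ≠ ∞ :=
        (ENNReal.rpow_lt_top_of_nonneg (by positivity) (measure_ne_top μ _)).ne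
      set ρ := ε₂ / (M + 1) with hρdef
      have hρ0 : 0 < ρ := ENNReal.div_pos hε₂0 (by simp [hMtop])
      have hρtop : ρ ≠ ∞ := by
        simp [hρdef, ENNReal.div_eq_top, hε₂top]
      set c0 := ρ.toReal with hc0def
      have hc00 : 0 < c0 := ENNReal.toReal_pos hρ0.ne' hρtop
      -- the regularization parameter δ and polynomial accuracy η
      set δ := (c0 / 2) ^ (2 / θ) with hδdef
      have hδ0 : 0 < δ := Real.rpow_pos_of_pos (by linarith) _
      have hδval : δ ^ (θ / 2) = c0 / 2 := by
        rw [hδdef, ← Real.rpow_mul (by linarith)]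
        rw [show 2 / θ * (θ / 2) = 1 by field_simp]
        exact Real.rpow_one _
      set η := c0 / (2 * (B + 1)) with hηdef
      have hη0 : 0 < η := by
        apply div_pos (by linarith)
        nlinarith
      -- Weierstrass approximation of the regularized power function
      set φ := fun t : ℝ => (δ + max t 0) ^ ((θ - 1) / 2) with hφdef
      have hφcont : Continuous φ := by
        apply Continuous.rpow_const
        · exact continuous_const.add (continuous_id.max continuous_const)
        · intro t
          left
          have : 0 ≤ max t 0 := le_max_right _ _
          positivity
      obtain ⟨Q, hQ⟩ := exists_poly_near 0 (B ^ 2) φ hφcont hη0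
      -- the approximating trigonometric polynomial
      set w : Γ → ℂ := fun γ =>
        (Q.map Complex.ofRealHom).eval (p γ * (starRingEnd ℂ) (p γ)) with hwdef
      set p' : Γ → ℂ := fun γ => p γ * w γ with hp'def
      have hp'_mem : p' ∈ trigPoly e H x := by
        have hP2 : (fun γ => p γ * (starRingEnd ℂ) (p γ)) ∈ trigPoly e H 0 := by
          have hstar : star p ∈ trigPoly e H (-x) :=
            trigPoly_star e H he_norm he_addG hp
          have := trigPoly_mul e H he_addG hp hstar
          rwa [add_neg_cancel] at this
        have hw_mem : w ∈ trigPoly e H 0 :=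
          trigPoly_polyeval e H he_norm he_addG hP2 (Q.map Complex.ofRealHom)
        have := trigPoly_mul e H he_addG hp hw_mem
        rwa [add_zero] at this
      -- pointwise bound on ‖psi θ (p γ) - p' γ‖
      have hptbd : ∀ γ, ‖Stmt7Aux.psi θ (p γ) - p' γ‖ ≤ c0 := by
        intro γ
        set t := Complex.normSq (p γ) with htdef
        have ht0 : 0 ≤ t := Complex.normSq_nonneg _
        have htnorm : t = ‖p γ‖ ^ 2 := by
          rw [htdef, Complex.normSq_eq_norm_sq]
        have htB : t ≤ B ^ 2 := by
          rw [htnorm]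
          exact pow_le_pow_left₀ (norm_nonneg _) (hBp γ) 2
        have hweval : w γ = ((Q.eval t : ℝ) : ℂ) := by
          rw [hwdef]
          simp only
          rw [Complex.mul_conj, ← htdef]
          rw [Polynomial.eval_map]
          exact Polynomial.eval₂_at_apply Complex.ofRealHom t
        have hφval : φ t = (δ + t) ^ ((θ - 1) / 2) := by
          rw [hφdef]
          simp [max_eq_left ht0]
        have hQerr : |φ t - Q.eval t| ≤ η := hQ t ⟨ht0, htB⟩
        have step1 : ‖Stmt7Aux.psi θ (p γ) - ((φ t : ℝ)) • p γ‖ ≤ c0 / 2 := by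
          rw [hφval, htnorm]
          calc ‖Stmt7Aux.psi θ (p γ) - ((δ + ‖p γ‖ ^ 2) ^ ((θ - 1) / 2) : ℝ) • p γ‖
              ≤ δ ^ (θ / 2) := Stmt7Aux.psi_approx hθ0 hθ1.le hδ0 (p γ)
            _ = c0 / 2 := hδval
        have step2 : ‖((φ t : ℝ)) • p γ - p' γ‖ ≤ c0 / 2 := by
          rw [hp'def]
          simp only
          rw [hweval]
          have : ((φ t : ℝ)) • p γ - p γ * ((Q.eval t : ℝ) : ℂ)
              = ((φ t - Q.eval t : ℝ) : ℂ) * p γ := by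
            rw [Complex.ofReal_sub]
            ring_nf
            rw [Complex.real_smul]
            ring
          rw [this, norm_mul, Complex.norm_real, Real.norm_eq_abs]
          calc |φ t - Q.eval t| * ‖p γ‖ ≤ η * B := by
                apply mul_le_mul hQerr (hBp γ) (norm_nonneg _) hη0.le
            _ ≤ c0 / 2 := by
                rw [hηdef]
                rw [div_mul_eq_mul_div, div_le_div_iff₀ (by nlinarith) (by norm_num)]
                nlinarith
        calc ‖Stmt7Aux.psi θ (p γ) - p' γ‖
            ≤ ‖Stmt7Aux.psi θ (p γ) - ((φ t : ℝ)) • p γ‖ + ‖((φ t : ℝ)) • p γ - p' γ‖ := by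
              have : Stmt7Aux.psi θ (p γ) - p' γ
                  = (Stmt7Aux.psi θ (p γ) - ((φ t : ℝ)) • p γ) + (((φ t : ℝ)) • p γ - p' γ) := by
                ring
              rw [this]
              exact norm_add_le _ _
          _ ≤ c0 / 2 + c0 / 2 := add_le_add step1 step2
          _ = c0 := by ring
      -- measurability facts
      have hpsi_cont : Continuous (Stmt7Aux.psi θ) := Stmt7Aux.psi_continuous hθ0 hθ1.le
      have hpsip_sm : AEStronglyMeasurable (fun γ => Stmt7Aux.psi θ (p γ)) μ :=
        (hpsi_cont.comp hp_cont).aestronglyMeasurable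
      have hp'_cont : Continuous p' := trigPoly_continuous e H he_cont hp'_mem
      -- the two eLpNorm bounds
      have hT2 : eLpNorm ((fun γ => Stmt7Aux.psi θ (p γ)) - p') α μ ≤ ε₂ := by
        have hbd : ∀ᵐ γ ∂μ, ‖((fun γ => Stmt7Aux.psi θ (p γ)) - p') γ‖ ≤ c0 :=
          ae_of_all μ fun γ => by
            rw [Pi.sub_apply]
            exact hptbd γ
        calc eLpNorm ((fun γ => Stmt7Aux.psi θ (p γ)) - p') α μ
            ≤ μ Set.univ ^ α.toReal⁻¹ * ENNReal.ofReal c0 := eLpNorm_le_of_ae_bound hbd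
          _ = M * ρ := by
              rw [hMdef, hc0def, ENNReal.ofReal_toReal hρtop, hadef]
          _ ≤ (M + 1) * ρ := mul_le_mul_left le_self_add _
          _ = ε₂ := by
              rw [hρdef]
              exact ENNReal.mul_div_cancel' (by simp) (by simp [hMtop])
      have hT1 : eLpNorm (g - fun γ => Stmt7Aux.psi θ (p γ)) α μ ≤ ε₂ := by
        have hpt3 : ∀ γ, ‖(g - fun γ => Stmt7Aux.psi θ (p γ)) γ‖ ≤ 3 * ‖(f - p) γ‖ ^ θ := by
          intro γ
          rw [Pi.sub_apply, Pi.sub_apply]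
          exact Stmt7Aux.psi_holder hθ0 hθ1.le (f γ) (p γ)
        calc eLpNorm (g - fun γ => Stmt7Aux.psi θ (p γ)) α μ
            ≤ ENNReal.ofReal 3 * eLpNorm (f - p) β μ ^ θ :=
              eLpNorm_le_pow_bound hα0.ne' hαtop hβ0.ne' hβtop (by norm_num) hθ0 hθab hpt3
          _ ≤ 4 * (ε₁ ^ θ) := by
              apply mul_le_mul
              · calc ENNReal.ofReal 3 ≤ ENNReal.ofReal 4 := ENNReal.ofReal_le_ofReal (by norm_num)
                  _ = 4 := by norm_num
              · exact ENNReal.rpow_le_rpow hclose.le hθ0.le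
              · exact zero_le
              · exact zero_le
          _ = 4 * (ε₂ / 4) := by
              rw [hε₁def, ← ENNReal.rpow_mul, one_div_mul_cancel hθ0.ne', ENNReal.rpow_one]
          _ = ε₂ := ENNReal.mul_div_cancel' (by norm_num) (by norm_num)
      -- combine
      refine ⟨p', hp'_mem, ?_⟩
      have hsplit : g - p' = (g - fun γ => Stmt7Aux.psi θ (p γ))
          + ((fun γ => Stmt7Aux.psi θ (p γ)) - p') := by
        rw [sub_add_sub_cancel]
      calc eLpNorm (g - p') α μ
          = eLpNorm ((g - fun γ => Stmt7Aux.psi θ (p γ))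
              + ((fun γ => Stmt7Aux.psi θ (p γ)) - p')) α μ := by rw [hsplit]
        _ ≤ L * (eLpNorm (g - fun γ => Stmt7Aux.psi θ (p γ)) α μ
              + eLpNorm ((fun γ => Stmt7Aux.psi θ (p γ)) - p') α μ) :=
            eLpNorm_add_le' (hg_sm.sub hpsip_sm)
              (hpsip_sm.sub hp'_cont.aestronglyMeasurable) α
        _ ≤ L * (ε₂ + ε₂) := by
            exact mul_le_mul_right (add_le_add hT1 hT2) L
        _ = L * ε₃ := by rw [hε₂def, ENNReal.add_halves]
        _ ≤ (L + 1) * ε₃ := mul_le_mul_left le_self_add _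
        _ = m / 2 := by
            rw [hε₃def]
            exact ENNReal.mul_div_cancel' (by simp) (by simp [hLtop])
        _ < m := ENNReal.half_lt_self hm0 hmtop
        _ ≤ ε := min_le_right _ _
    -- conclude with H-regularity at exponent α
    have hg0 : g =ᵐ[μ] 0 := hreg g hg_cl
    filter_upwards [hg0] with γ hγ
    simp only [hgdef, Pi.zero_apply] at hγ ⊢
    by_contra hne
    have hfγ : (0:ℝ) < ‖f γ‖ := norm_pos_iff.2 hne
    have : (‖f γ‖ ^ (θ - 1) : ℝ) ≠ 0 := (Real.rpow_pos_of_pos hfγ _).ne'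
    exact hne (by
      have := smul_eq_zero.1 hγ
      tauto)
end

section
/- Let Λ be a finite subgroup of an LCA group Γ and μ a finite regular Borel measure on Γ. If there exists a Borel transversal T with respect to Λ such that μ is periodic with respect to Λ and T (i.e., μ(B) = μ(λ + B) for all λ ∈ Λ and all Borel B ⊆ T), then μ is periodic with respect to Λ and every Borel transversal. -/
open MeasureTheory Set Pointwise

/-- If `Λ` is a finite subgroup of an LCA group `Γ` and the finite regular
Borel measure `μ` is periodic with respect to `Λ` and some Borel transversal `T`
(`μ(B) = μ(λ + B)` for all `λ ∈ Λ`, Borel `B ⊆ T`), then `μ` is periodic with respect to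
`Λ` and every Borel transversal. -/
theorem stmt12 {Γ : Type*} [AddCommGroup Γ] [TopologicalSpace Γ]
    [IsTopologicalAddGroup Γ] [T2Space Γ] [LocallyCompactSpace Γ]
    [MeasurableSpace Γ] [BorelSpace Γ]
    (Λ : AddSubgroup Γ) [Finite Λ]
    (μ : Measure Γ) [IsFiniteMeasure μ] [μ.Regular]
    (T : Set Γ) (hT : MeasurableSet T)
    (htrans : ∀ γ : Γ, ∃! t, t ∈ T ∧ γ - t ∈ Λ)
    (hper : ∀ l ∈ Λ, ∀ B ⊆ T, MeasurableSet B → μ B = μ (l +ᵥ B)) :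
    ∀ T' : Set Γ, MeasurableSet T' → (∀ γ : Γ, ∃! t, t ∈ T' ∧ γ - t ∈ Λ) →
      ∀ l ∈ Λ, ∀ B ⊆ T', MeasurableSet B → μ B = μ (l +ᵥ B) := by
  intro T' hT' htrans' l hl B hBT' hB
  -- decompose B into pieces according to which Λ-translate of T they lie in
  set f : Λ → Set Γ := fun lam => B ∩ ((lam : Γ) +ᵥ T) with hf
  have hfmeas : ∀ lam : Λ, MeasurableSet (f lam) := fun lam =>
    hB.inter (hT.const_vadd (lam : Γ))
  have hunion : B = ⋃ lam : Λ, f lam := by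
    ext b
    simp only [mem_iUnion, hf, mem_inter_iff]
    constructor
    · intro hb
      obtain ⟨t, ⟨htT, htΛ⟩, -⟩ := htrans b
      exact ⟨⟨b - t, htΛ⟩, hb, ⟨t, htT, by simp⟩⟩
    · rintro ⟨lam, hb, -⟩
      exact hb
  have hdisj : Pairwise (Function.onFun Disjoint f) := by
    intro l1 l2 hne
    rw [Function.onFun, Set.disjoint_left]
    rintro x ⟨-, hx1⟩ ⟨-, hx2⟩
    obtain ⟨t1, ht1T, h1⟩ := hx1
    obtain ⟨t2, ht2T, h2⟩ := hx2
    simp only [vadd_eq_add] at h1 h2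
    obtain ⟨t, -, huniq⟩ := htrans x
    have e1 : t1 = t := huniq t1 ⟨ht1T, by rw [← h1]; simpa using l1.2⟩
    have e2 : t2 = t := huniq t2 ⟨ht2T, by rw [← h2]; simpa using l2.2⟩
    apply hne
    rw [e1] at h1
    rw [e2] at h2
    exact Subtype.ext ((add_left_inj t).mp (h1.trans h2.symm))
  -- termwise equality of measures
  have key : ∀ lam : Λ, μ (f lam) = μ (l +ᵥ f lam) := by
    intro lam
    have hDT : ((-(lam : Γ)) +ᵥ f lam) ⊆ T := by
      rintro x ⟨y, ⟨-, ⟨t, htT, rfl⟩⟩, rfl⟩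
      simpa [vadd_eq_add] using htT
    have hDm : MeasurableSet ((-(lam : Γ)) +ᵥ f lam) := (hfmeas lam).const_vadd _
    calc μ (f lam) = μ ((lam : Γ) +ᵥ ((-(lam : Γ)) +ᵥ f lam)) := by
          rw [vadd_vadd]; simp
      _ = μ ((-(lam : Γ)) +ᵥ f lam) :=
          (hper _ lam.2 _ hDT hDm).symm
      _ = μ ((l + (lam : Γ)) +ᵥ ((-(lam : Γ)) +ᵥ f lam)) :=
          hper _ (Λ.add_mem hl lam.2) _ hDT hDm
      _ = μ (l +ᵥ f lam) := by rw [vadd_vadd, add_assoc]; simp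
  have hvadd : l +ᵥ B = ⋃ lam : Λ, l +ᵥ f lam := by
    rw [hunion, Set.vadd_set_iUnion]
  rw [hvadd, hunion, measure_iUnion hdisj hfmeas,
    measure_iUnion (fun l1 l2 hne => Set.disjoint_vadd_set.mpr (hdisj hne))
      (fun lam => (hfmeas lam).const_vadd l)]
  exact tsum_congr key
end

section
/- Let μ be a finite regular Borel measure on Γ, Λ a countable subgroup, T a Borel transversal, ρ := Σ_{λ∈Λ} μ(λ + ·), and g := dμ/dρ. Then for every f ∈ L^1(μ) and every κ ∈ Λ: ∫_Γ f dμ = ∫_{T+κ} Σ_{λ∈Λ} f(γ + λ) g(γ + λ) dρ(γ). -/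
open MeasureTheory Set Pointwise

/-- With `ρ := ∑_{λ∈Λ} μ(λ + ·)` and `g := dμ/dρ`, for every `f ∈ L¹(μ)`
and `κ ∈ Λ`: `∫_Γ f dμ = ∫_{T+κ} ∑_{λ∈Λ} f(γ+λ) g(γ+λ) dρ(γ)`. -/
theorem stmt14 {Γ : Type*} [AddCommGroup Γ] [TopologicalSpace Γ]
    [IsTopologicalAddGroup Γ] [T2Space Γ] [LocallyCompactSpace Γ]
    [MeasurableSpace Γ] [BorelSpace Γ]
    (Λ : AddSubgroup Γ) [Countable Λ]
    (μ : Measure Γ) [IsFiniteMeasure μ] [μ.Regular]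
    (T : Set Γ) (hT : MeasurableSet T)
    (htrans : ∀ γ : Γ, ∃! t, t ∈ T ∧ γ - t ∈ Λ)
    (ρ : Measure Γ)
    (hρ : ρ = Measure.sum fun l : Λ => Measure.map (fun γ => γ - (l : Γ)) μ)
    (f : Γ → ℂ) (hf : Integrable f μ) (κ : Λ) :
    ∫ γ, f γ ∂μ =
      ∫ γ in ((κ : Γ) +ᵥ T),
        ∑' l : Λ, (μ.rnDeriv ρ (γ + (l : Γ))).toReal • f (γ + (l : Γ)) ∂ρ := by
  classical
  haveI : MeasurableVAdd Λ Γ :=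
    { measurable_const_vadd := fun l => measurable_const_add (l : Γ)
      measurable_vadd_const := fun x => measurable_subtype_coe.add_const x }
  -- preimage under translation
  have hpre : ∀ (c : Γ) (A : Set Γ), (fun γ => γ - c) ⁻¹' A = c +ᵥ A := by
    intro c A
    ext γ
    constructor
    · intro h
      exact ⟨γ - c, h, by show c + (γ - c) = γ; abel⟩
    · rintro ⟨a, ha, rfl⟩
      show ((c + a) - c) ∈ A
      simpa using ha
  -- value of ρ on measurable sets
  have hρ_apply : ∀ {A : Set Γ}, MeasurableSet A → ρ A = ∑' l : Λ, μ ((l : Γ) +ᵥ A) := by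
    intro A hA
    rw [hρ, Measure.sum_apply _ hA]
    refine tsum_congr fun l => ?_
    rw [Measure.map_apply (measurable_sub_const _) hA, hpre]
  -- disjointness of translates of T
  have hdisj : Pairwise (Function.onFun Disjoint fun l : Λ => (l : Γ) +ᵥ T) := by
    intro l l' hne
    rw [Function.onFun, Set.disjoint_left]
    rintro γ ⟨t, ht, rfl⟩ ⟨t', ht', h'⟩
    have h'' : (l' : Γ) + t' = (l : Γ) + t := h'
    obtain ⟨t₀, -, huniq⟩ := htrans ((l : Γ) + t)
    have h1 : t = t₀ := huniq t ⟨ht, by simpa using l.2⟩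
    have h2 : t' = t₀ := huniq t' ⟨ht', by rw [← h'']; simpa using l'.2⟩
    apply hne
    apply Subtype.ext
    have ht12 : t = t' := h1.trans h2.symm
    rw [← ht12] at h''
    exact (add_right_cancel h'').symm
  -- translates of T cover Γ
  have hcover : ⋃ l : Λ, (l : Γ) +ᵥ T = univ := by
    ext γ
    simp only [mem_iUnion, mem_univ, iff_true]
    obtain ⟨t, ⟨htT, htΛ⟩, -⟩ := htrans γ
    exact ⟨⟨γ - t, htΛ⟩, t, htT, by simp [vadd_eq_add]⟩
  -- total mass of translates is finite
  have hsum_lt : (∑' l : Λ, μ ((l : Γ) +ᵥ T)) < ⊤ := by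
    rw [← measure_iUnion hdisj fun l => hT.const_vadd _]
    exact measure_lt_top μ _
  -- ρ of each translate of T is finite
  have hρT : ∀ m : Λ, ρ ((m : Γ) +ᵥ T) < ⊤ := by
    intro m
    rw [hρ_apply (hT.const_vadd _)]
    have hre : ∀ l : Λ, (l : Γ) +ᵥ ((m : Γ) +ᵥ T) = ((l + m : Λ) : Γ) +ᵥ T := by
      intro l; rw [vadd_vadd]; norm_cast
    calc (∑' l : Λ, μ ((l : Γ) +ᵥ ((m : Γ) +ᵥ T)))
        = ∑' l : Λ, μ (((l + m : Λ) : Γ) +ᵥ T) := by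
          exact tsum_congr fun l => by rw [hre]
      _ = ∑' l : Λ, μ ((l : Γ) +ᵥ T) :=
          (Equiv.addRight m).tsum_eq fun l : Λ => μ ((l : Γ) +ᵥ T)
      _ < ⊤ := hsum_lt
  haveI : SigmaFinite ρ :=
    Measure.sigmaFinite_of_countable (countable_range fun l : Λ => (l : Γ) +ᵥ T)
      (by rintro s ⟨l, rfl⟩; exact hρT l)
      (by rw [sUnion_range]; exact hcover)
  -- μ is absolutely continuous w.r.t. ρ
  have hac : μ ≪ ρ := by
    refine Measure.absolutelyContinuous_of_le ?_
    have h0 : μ = Measure.map (fun γ => γ - ((0 : Λ) : Γ)) μ := by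
      have : (fun γ : Γ => γ - ((0 : Λ) : Γ)) = id := by funext γ; simp
      rw [this, Measure.map_id]
    rw [hρ]
    exact h0.le.trans (Measure.le_sum _ (0 : Λ))
  -- ρ is invariant under translations by Λ
  haveI : VAddInvariantMeasure Λ Γ ρ := by
    constructor
    intro c s hs
    have hms : MeasurableSet ((fun x => c +ᵥ x) ⁻¹' s) :=
      (measurable_const_vadd c) hs
    rw [hρ, Measure.sum_apply _ hms, Measure.sum_apply _ hs]
    have key : ∀ l : Λ, (Measure.map (fun γ => γ - (l : Γ)) μ) ((fun x => c +ᵥ x) ⁻¹' s)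
        = (Measure.map (fun γ => γ - ((l - c : Λ) : Γ)) μ) s := by
      intro l
      rw [Measure.map_apply (measurable_sub_const _) hms,
        Measure.map_apply (measurable_sub_const _) hs, ← preimage_comp]
      have hfe : ((fun x => c +ᵥ x) ∘ fun x : Γ => x - (l : Γ))
          = fun γ : Γ => γ - ((l - c : Λ) : Γ) := by
        funext γ
        show (c : Γ) + (γ - (l : Γ)) = γ - ((l - c : Λ) : Γ)
        push_cast
        abel
      rw [hfe]
    calc (∑' l : Λ, (Measure.map (fun γ => γ - (l : Γ)) μ) ((fun x => c +ᵥ x) ⁻¹' s))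
        = ∑' l : Λ, (Measure.map (fun γ => γ - ((l - c : Λ) : Γ)) μ) s :=
          tsum_congr key
      _ = ∑' l : Λ, (Measure.map (fun γ => γ - (l : Γ)) μ) s :=
          (Equiv.subRight c).tsum_eq fun l : Λ => (Measure.map (fun γ => γ - (l : Γ)) μ) s
  -- the translated transversal is a fundamental domain for ρ
  have hS : MeasurableSet ((κ : Γ) +ᵥ T) := hT.const_vadd _
  have hfd : IsAddFundamentalDomain Λ ((κ : Γ) +ᵥ T) ρ := by
    refine IsAddFundamentalDomain.mk' hS.nullMeasurableSet fun x => ?_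
    obtain ⟨t, ⟨htT, htΛ⟩, huniq⟩ := htrans x
    refine ⟨κ - ⟨x - t, htΛ⟩, ?_, ?_⟩
    · show ((κ - ⟨x - t, htΛ⟩ : Λ) : Γ) + x ∈ (κ : Γ) +ᵥ T
      refine ⟨t, htT, ?_⟩
      show (κ : Γ) + t = ((κ - ⟨x - t, htΛ⟩ : Λ) : Γ) + x
      push_cast
      abel
    · rintro l hl
      obtain ⟨t', ht'T, ht'⟩ := hl
      have ht'' : (κ : Γ) + t' = (l : Γ) + x := ht'
      have hx : x = (κ : Γ) + t' - (l : Γ) := by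
        rw [eq_sub_iff_add_eq, add_comm]
        exact ht''.symm
      have hxt' : x - t' = ((κ - l : Λ) : Γ) := by push_cast; rw [hx]; abel
      have ht'mem : x - t' ∈ Λ := by rw [hxt']; exact (κ - l).2
      have : t' = t := huniq t' ⟨ht'T, ht'mem⟩
      apply Subtype.ext
      show (l : Γ) = ((κ - ⟨x - t, htΛ⟩ : Λ) : Γ)
      push_cast
      rw [← this, hx]
      abel
  -- main computation
  have hFint : Integrable (fun γ => (μ.rnDeriv ρ γ).toReal • f γ) ρ :=
    (MeasureTheory.integrable_rnDeriv_smul_iff hac).mpr hf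
  have h1 : ∫ γ, f γ ∂μ = ∫ γ, (μ.rnDeriv ρ γ).toReal • f γ ∂ρ :=
    (MeasureTheory.integral_rnDeriv_smul hac).symm
  have h2 := hfd.integral_eq_tsum'' (fun γ => (μ.rnDeriv ρ γ).toReal • f γ) hFint
  have hco : ∀ l : Λ, (fun γ : Γ => (μ.rnDeriv ρ (l +ᵥ γ)).toReal • f (l +ᵥ γ))
      = fun γ : Γ => (μ.rnDeriv ρ (γ + (l : Γ))).toReal • f (γ + (l : Γ)) := by
    intro l
    funext γ
    rw [show (l +ᵥ γ : Γ) = γ + (l : Γ) from add_comm _ _]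
  have hmeasG : ∀ l : Λ,
      AEStronglyMeasurable (fun γ : Γ => (μ.rnDeriv ρ (γ + (l : Γ))).toReal • f (γ + (l : Γ)))
        (ρ.restrict ((κ : Γ) +ᵥ T)) := by
    intro l
    rw [← hco l]
    exact ((hFint.aestronglyMeasurable.comp_quasiMeasurePreserving
      (measurePreserving_vadd l ρ).quasiMeasurePreserving)).restrict
  have hfin : (∑' l : Λ, ∫⁻ γ, ‖(μ.rnDeriv ρ (γ + (l : Γ))).toReal • f (γ + (l : Γ))‖₊
      ∂(ρ.restrict ((κ : Γ) +ᵥ T))) ≠ ⊤ := by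
    have hl := hfd.lintegral_eq_tsum''
      (fun γ => (‖(μ.rnDeriv ρ γ).toReal • f γ‖₊ : ENNReal))
    have haux : ∀ (l : Λ) (γ : Γ), l +ᵥ γ = γ + (l : Γ) := fun l γ => add_comm _ _
    simp only [haux] at hl
    rw [← hl]
    exact hFint.2.ne
  have h3 : (fun l : Λ => ∫ x in ((κ : Γ) +ᵥ T),
        (fun γ => (μ.rnDeriv ρ γ).toReal • f γ) (l +ᵥ x) ∂ρ)
      = fun l : Λ => ∫ x in ((κ : Γ) +ᵥ T),
        (μ.rnDeriv ρ (x + (l : Γ))).toReal • f (x + (l : Γ)) ∂ρ := by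
    funext l
    exact congrArg (fun F : Γ → ℂ => ∫ x in ((κ : Γ) +ᵥ T), F x ∂ρ) (hco l)
  rw [h1, h2, tsum_congr (congrFun h3)]
  exact (MeasureTheory.integral_tsum hmeasG hfin).symm
end
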